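/- arXiv:2310.06493 — 7 statements merged into one kernel-verified Lean document; each statement's English description precedes it below -/
import Mathlib

section
/- Let u be an automorphism of order 3 of the Klein four-group V_4, and let G = V_4 ⋊ ⟨u⟩. Then every automorphism φ of G such that φ(û) is conjugate in G to û is an inner automorphism of G. (In the paper's notation: Out(V_4, u) = {1}.) -/
/-!
An automorphism `u` of order 3 of `V₄` permutes its three involutions cyclically, so its
centralizer in `Aut V₄` is `⟨u⟩`. After composing `φ` with an inner automorphism we may assume
that `φ` fixes `û`, hence all of `⟨û⟩`. Since `⟨u⟩` has odd order, the elements of `G` of square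
one all lie in `V₄`, so `φ` restricts to an automorphism of `V₄` commuting with `u`, i.e. to some
`u ^ k`; then `φ` agrees with conjugation by `û ^ k` on both factors.
-/

local notation "V₄" => Multiplicative (ZMod 2 × ZMod 2)

namespace SemidirectProduct

variable {N G : Type*} [Group N] [Group G] {φ : G →* MulAut N}

theorem right_eq_one_of_sq_eq_one (hG : Odd (Nat.card G)) {g : N ⋊[φ] G} (hg : g ^ 2 = 1) :
    g.right = 1 := by
  have h2 : rightHom g ^ 2 = 1 := by rw [← map_pow, hg, map_one]
  rw [← orderOf_eq_one_iff]
  exact Nat.eq_one_of_dvd_coprimes (Nat.coprime_two_left.mpr hG) (orderOf_dvd_of_pow_eq_one h2)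
    (orderOf_dvd_natCard _)

theorem right_apply_inl_eq_one (hN : ∀ n : N, n ^ 2 = 1) (hG : Odd (Nat.card G))
    (ψ : N ⋊[φ] G →* N ⋊[φ] G) (n : N) : (ψ (inl n)).right = 1 :=
  right_eq_one_of_sq_eq_one hG (by rw [← map_pow, ← map_pow, hN, map_one, map_one])

section restrictInl

variable (ψ : N ⋊[φ] G →* N ⋊[φ] G) (hψ : ∀ n, (ψ (inl n)).right = 1)

def restrictInl : N →* N where
  toFun n := (ψ (inl n)).left
  map_one' := by simp
  map_mul' x y := by simp [mul_left, hψ]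

theorem inl_restrictInl (n : N) : inl (restrictInl ψ hψ n) = ψ (inl n) := by
  ext
  · rfl
  · exact (hψ n).symm

theorem restrictInl_injective (hinj : Function.Injective ψ) :
    Function.Injective (restrictInl ψ hψ) := fun x y h => by
  simpa [inl_restrictInl, hinj.eq_iff] using congrArg (inl (φ := φ)) h

theorem restrictInl_aut {g : G} (hg : ψ (inr g) = inr g) (n : N) :
    restrictInl ψ hψ (φ g n) = φ g (restrictInl ψ hψ n) := by
  apply inl_injective (φ := φ)
  rw [inl_restrictInl, inl_aut, inl_aut, map_mul, map_mul, inl_restrictInl,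
    map_inv (inr (φ := φ)), map_inv, hg]

end restrictInl

theorem eq_conj_inr {ψ : N ⋊[φ] G →* N ⋊[φ] G} {g₀ : G} (hg₀ : g₀ ∈ Subgroup.center G)
    (hinr : ∀ g, ψ (inr g) = inr g) (hinl : ∀ n, ψ (inl n) = inl (φ g₀ n)) :
    ψ = (MulAut.conj (inr g₀)).toMonoidHom := by
  have hconj : ∀ g, inr g₀ * inr g * (inr g₀)⁻¹ = (inr g : N ⋊[φ] G) := fun g => by
    rw [← map_inv, ← map_mul, ← map_mul, ← Subgroup.mem_center_iff.mp hg₀ g, mul_inv_cancel_right]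
  ext x : 1
  rw [← inl_left_mul_inr_right x, map_mul, hinl, hinr, inl_aut, map_inv,
    MulEquiv.coe_toMonoidHom, MulAut.conj_apply]
  conv_lhs => rw [← hconj x.right]
  group

end SemidirectProduct

set_option synthInstance.maxSize 2048 in
set_option maxRecDepth 100000 in
theorem klein_four_exists_pow_apply_eq (u : MulAut V₄) (hu : orderOf u = 3) {x y : V₄}
    (hx : x ≠ 1) (hy : y ≠ 1) : ∃ k : ℕ, (u ^ k) x = y := by
  have hcube : ∀ a, u (u (u a)) = a := fun a => by
    rw [← MulAut.mul_apply, ← MulAut.mul_apply, ← pow_three', ← hu, pow_orderOf_eq_one,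
      MulAut.one_apply]
  have hne : ∃ a, u a ≠ a := by
    by_contra! h
    have : orderOf u = 1 := orderOf_eq_one_iff.mpr (MulEquiv.ext h)
    omega
  -- `decide` runs over all `4 ^ 4` self-maps of `V₄`.
  have three_cycle : ∀ F : V₄ → V₄, (∀ a b, F (a * b) = F a * F b) → (∀ a, F (F (F a)) = a) →
      (∃ a, F a ≠ a) → ∀ a b : V₄, a ≠ 1 → b ≠ 1 → b = a ∨ b = F a ∨ b = F (F a) := by
    decide
  rcases three_cycle u (map_mul u) hcube hne x y hx hy with h | h | h
  · exact ⟨0, by simp [h]⟩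
  · exact ⟨1, by simp [h]⟩
  · exact ⟨2, by simp [h, pow_two]⟩

theorem klein_four_exists_pow_eq_of_commute (u : MulAut V₄) (hu : orderOf u = 3) (f : V₄ →* V₄)
    (hf : Function.Injective f) (hfu : ∀ x, f (u x) = u (f x)) :
    ∃ k : ℕ, ∀ x, f x = (u ^ k) x := by
  have hfu_pow : ∀ (j : ℕ) x, f ((u ^ j) x) = (u ^ j) (f x) := by
    intro j
    induction j with
    | zero => simp
    | succ j ih => intro x; simp [pow_succ', hfu, ih]
  have ha : (Multiplicative.ofAdd (1, 0) : V₄) ≠ 1 := by decide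
  obtain ⟨k, hk⟩ := klein_four_exists_pow_apply_eq u hu ha ((map_ne_one_iff f hf).mpr ha)
  refine ⟨k, fun x => ?_⟩
  rcases eq_or_ne x 1 with rfl | hx
  · simp
  obtain ⟨j, rfl⟩ := klein_four_exists_pow_apply_eq u hu ha hx
  rw [hfu_pow, ← hk, ← MulAut.mul_apply, ← MulAut.mul_apply, pow_mul_comm]

open SemidirectProduct in
/-- For an automorphism `u` of order 3 of the Klein four-group `V₄` and
`G = V₄ ⋊ ⟨u⟩`, every automorphism `φ` of `G` sending `û` to a `G`-conjugate of `û`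
is inner; i.e. `Out(V₄, u) = 1`. -/
theorem out_klein_four_pair_trivial
    (u : MulAut (Multiplicative (ZMod 2 × ZMod 2))) (hu : orderOf u = 3)
    (φ : MulAut (SemidirectProduct (Multiplicative (ZMod 2 × ZMod 2))
      ↥(Subgroup.zpowers u) ((Subgroup.zpowers u).subtype)))
    (hφ : IsConj
      (φ (SemidirectProduct.inr ⟨u, Subgroup.mem_zpowers u⟩))
      (SemidirectProduct.inr ⟨u, Subgroup.mem_zpowers u⟩)) :
    ∃ g : SemidirectProduct (Multiplicative (ZMod 2 × ZMod 2))
      ↥(Subgroup.zpowers u) ((Subgroup.zpowers u).subtype),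
      ∀ x, φ x = g * x * g⁻¹ := by
  obtain ⟨c, hc⟩ := isConj_iff.mp hφ
  set û : Subgroup.zpowers u := ⟨u, Subgroup.mem_zpowers u⟩
  let ψ := (φ.trans (MulAut.conj c)).toMonoidHom
  have hψG : ∀ g, ψ (inr g) = inr g := Subgroup.forall_zpowers.mpr fun m => by
    change ψ (inr (û ^ m)) = inr (û ^ m)
    rw [map_zpow, map_zpow]
    exact congrArg (· ^ m) hc
  have hψN := right_apply_inl_eq_one (N := V₄) (by decide)
    (by rw [Nat.card_zpowers, hu]; decide) ψ
  have hfu := restrictInl_aut ψ hψN (hψG û)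
  simp only [Subgroup.coe_subtype] at hfu
  obtain ⟨k, hk⟩ := klein_four_exists_pow_eq_of_commute u hu _
    (restrictInl_injective ψ hψN (MulEquiv.injective _)) hfu
  have hψ : ψ = (MulAut.conj (inr (û ^ k))).toMonoidHom :=
    eq_conj_inr (by simp [Subgroup.center_eq_top]) hψG
      (fun n => (inl_restrictInl ψ hψN n).symm.trans (congrArg inl (hk n)))
  refine ⟨c⁻¹ * inr (û ^ k), fun x => ?_⟩
  have hx : c * φ x * c⁻¹ = inr (û ^ k) * x * (inr (û ^ k))⁻¹ := DFunLike.congr_fun hψ x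
  rw [show φ x = c⁻¹ * (c * φ x * c⁻¹) * c by group, hx]
  group
end

section
/- Let u be an automorphism of order 3 of the quaternion group Q_8, and let G = Q_8 ⋊ ⟨u⟩ (a group of order 24). Then the automorphism group Aut(G) is isomorphic to the symmetric group Sym(4). -/
open QuaternionGroup Subgroup Equiv

abbrev Q8 := QuaternionGroup 2

instance : DecidableEq (MulAut Q8) := fun f g =>
  decidable_of_iff (∀ x, f x = g x) ⟨fun h => MulEquiv.ext h, fun h x => h ▸ rfl⟩

def f0 : Q8 → Q8 := fun x =>
  match x with
  | .a i => if i = 0 then .a 0 else if i = 1 then .xa 0 else if i = 2 then .a 2 else .xa 2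
  | .xa i => if i = 0 then .xa 1 else if i = 1 then .a 1 else if i = 2 then .xa 3 else .a 3

def g0 : Q8 → Q8 := fun x =>
  match x with
  | .a i => if i = 0 then .a 0 else if i = 1 then .xa 1 else if i = 2 then .a 2 else .xa 3
  | .xa i => if i = 0 then .a 1 else if i = 1 then .xa 0 else if i = 2 then .a 3 else .xa 2

def u0 : MulAut Q8 :=
  { toFun := f0
    invFun := g0
    left_inv := fun x => (by decide : ∀ x, g0 (f0 x) = x) x
    right_inv := fun x => (by decide : ∀ x, f0 (g0 x) = x) x
    map_mul' := by decide }

theorem u0_pow3 : u0 ^ 3 = 1 := by decide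

theorem mem_zpowers_u0 {v : MulAut Q8} (h : v ∈ zpowers u0) :
    v = 1 ∨ v = u0 ∨ v = u0 ^ 2 := by
  obtain ⟨k, hk⟩ := h
  have h3 : u0 ^ (3 : ℤ) = 1 := by rw [show ((3:ℤ)) = ((3:ℕ):ℤ) by norm_num, zpow_natCast, u0_pow3]
  have hm : k % 3 = 0 ∨ k % 3 = 1 ∨ k % 3 = 2 := by omega
  have key : v = u0 ^ (k % 3) := by
    rw [← hk]
    show u0 ^ k = _
    conv_lhs => rw [← Int.mul_ediv_add_emod k 3]
    rw [zpow_add, zpow_mul, h3, one_zpow, one_mul]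
  rcases hm with h | h | h <;> rw [key, h]
  · exact Or.inl (zpow_zero _)
  · exact Or.inr (Or.inl (zpow_one _))
  · refine Or.inr (Or.inr ?_)
    rw [show ((2:ℤ)) = ((2:ℕ):ℤ) by norm_num, zpow_natCast]

abbrev H0 : Subgroup (MulAut Q8) := zpowers u0

def h0 (k : ℕ) : H0 := ⟨u0 ^ k, Subgroup.pow_mem _ (Subgroup.mem_zpowers u0) k⟩

instance : Fintype H0 :=
  ⟨{h0 0, h0 1, h0 2}, by
    rintro ⟨v, hv⟩
    rcases mem_zpowers_u0 hv with h | h | h <;> subst h <;>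
      simp only [Finset.mem_insert, Finset.mem_singleton]
    · exact Or.inl (Subtype.ext (by show (1 : MulAut Q8) = u0 ^ 0; decide))
    · exact Or.inr (Or.inl (Subtype.ext (by show u0 = u0 ^ 1; decide)))
    · exact Or.inr (Or.inr (Subtype.ext rfl))⟩

abbrev G0 := SemidirectProduct Q8 H0 H0.subtype

instance : DecidableEq G0 := fun x y =>
  decidable_of_iff (x.left = y.left ∧ x.right = y.right)
    ⟨fun ⟨h1, h2⟩ => SemidirectProduct.ext h1 h2, fun h => by subst h; exact ⟨rfl, rfl⟩⟩

def prodEquiv : Q8 × H0 ≃ G0 :=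
  { toFun := fun p => ⟨p.1, p.2⟩
    invFun := fun z => (z.left, z.right)
    left_inv := fun p => rfl
    right_inv := fun z => rfl }

instance : Fintype G0 := Fintype.ofEquiv _ prodEquiv

def E (q : Q8) (k : ℕ) : G0 := ⟨q, h0 k⟩

-- generators
def tt : G0 := E (.a 0) 1
def ss : G0 := E (.a 1) 1
def rr : G0 := E (.xa 0) 1
def ww : G0 := E (.xa 1) 1

example : tt * tt * tt = 1 := by decide
example : rr = tt * ss * tt⁻¹ := by decide
example : ww = ss * tt * ss⁻¹ := by decide
example : ∀ z : G0, z ^ 3 = 1 → z ≠ 1 →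
    (z = tt ∨ z = tt⁻¹ ∨ z = ss ∨ z = ss⁻¹ ∨ z = rr ∨ z = rr⁻¹ ∨ z = ww ∨ z = ww⁻¹) := by decide

-- beta: outer automorphism
def bq : Q8 → Q8 := fun q =>
  match q with
  | .a i => .a (-i)
  | .xa i => .xa (-1 - i)

def Fb : G0 → G0 := fun z => ⟨bq z.left, z.right⁻¹⟩

def beta : MulAut G0 :=
  { toFun := Fb
    invFun := Fb
    left_inv := fun z => (by decide : ∀ z, Fb (Fb z) = z) z
    right_inv := fun z => (by decide : ∀ z, Fb (Fb z) = z) z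
    map_mul' := by decide }

open Pointwise

-- subgroup of order dividing 3 generated by z
def sub3 {G : Type*} [Group G] (z : G) (hz : z * (z * z) = 1) : Subgroup G where
  carrier := {x | x = 1 ∨ x = z ∨ x = z * z}
  one_mem' := Or.inl rfl
  mul_mem' := by
    have h4 : (z * z) * (z * z) = z := by
      calc (z * z) * (z * z) = (z * (z * z)) * z := by group
      _ = z := by rw [hz, one_mul]
    have h3 : (z * z) * z = 1 := by rw [mul_assoc]; exact hz
    rintro x y (rfl | rfl | rfl) (rfl | rfl | rfl) <;>
      simp only [Set.mem_setOf_eq, one_mul, mul_one, hz, h4, h3] <;> tauto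
  inv_mem' := by
    have h3 : (z * z) * z = 1 := by rw [mul_assoc]; exact hz
    rintro x (rfl | rfl | rfl)
    · exact Or.inl inv_one
    · exact Or.inr (Or.inr (inv_eq_of_mul_eq_one_right hz))
    · exact Or.inr (Or.inl (inv_eq_of_mul_eq_one_right h3))

theorem mem_sub3 {G : Type*} [Group G] {z x : G} {hz : z * (z * z) = 1} :
    x ∈ sub3 z hz ↔ (x = 1 ∨ x = z ∨ x = z * z) := Iff.rfl

def gen : Fin 4 → G0 := ![tt, ss, rr, ww]

theorem hgen : ∀ i, gen i * (gen i * gen i) = 1 := by decide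

def PP (i : Fin 4) : Subgroup G0 := sub3 (gen i) (hgen i)

theorem mem_PP {i : Fin 4} {x : G0} : x ∈ PP i ↔ (x = 1 ∨ x = gen i ∨ x = gen i * gen i) :=
  Iff.rfl

instance (i : Fin 4) (x : G0) : Decidable (x ∈ PP i) :=
  decidable_of_iff _ mem_PP.symm

theorem exists_PP {y : G0} (h3 : y * (y * y) = 1) (h1 : y ≠ 1) :
    ∃ j, ∀ x, x ∈ PP j ↔ (x = 1 ∨ x = y ∨ x = y * y) :=
  (by decide : ∀ y : G0, y * (y * y) = 1 → y ≠ 1 →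
    ∃ j, ∀ x, x ∈ PP j ↔ (x = 1 ∨ x = y ∨ x = y * y)) y h3 h1

theorem smul_PP_eq (φ : MulAut G0) {i j : Fin 4}
    (h : ∀ x : G0, φ⁻¹ • x ∈ PP i ↔ x ∈ PP j) : φ • PP i = PP j :=
  SetLike.ext fun x => (Subgroup.mem_pointwise_smul_iff_inv_smul_mem).trans (h x)

theorem smul_PP (φ : MulAut G0) (i : Fin 4) : ∃ j, φ • PP i = PP j := by
  have key : φ (gen i) * (φ (gen i) * φ (gen i)) = 1 := by
    rw [← map_mul, ← map_mul, hgen i, map_one]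
  have h1 : φ (gen i) ≠ 1 := by
    intro h
    exact (by decide : ∀ i, gen i ≠ (1 : G0)) i (φ.injective (h.trans (map_one φ).symm))
  obtain ⟨j, hj⟩ := exists_PP key h1
  refine ⟨j, smul_PP_eq φ fun x => ?_⟩
  rw [hj x, mem_PP]
  simp only [MulAut.smul_def, MulAut.inv_def, MulEquiv.symm_apply_eq, map_one, map_mul]

def XS : Type := {H : Subgroup G0 // ∃ j, H = PP j}

instance : MulAction (MulAut G0) XS where
  smul φ H := ⟨φ • H.1, by
    obtain ⟨j, hj⟩ := H.2
    rw [hj]; exact smul_PP φ j⟩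
  one_smul H := Subtype.ext (one_smul _ _)
  mul_smul φ ψ H := Subtype.ext (mul_smul φ ψ H.1)

theorem XS_smul_val (φ : MulAut G0) (H : XS) : (φ • H).1 = φ • H.1 := rfl

def f4 : Fin 4 → XS := fun i => ⟨PP i, i, rfl⟩

theorem f4_bij : Function.Bijective f4 := by
  constructor
  · intro i j h
    have hmem : gen i ∈ PP j := by
      have hv : PP i = PP j := congrArg Subtype.val h
      rw [← hv]
      exact (by decide : ∀ i, gen i ∈ PP i) i
    exact (by decide : ∀ i j : Fin 4, gen i ∈ PP j → i = j) i j hmem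
  · rintro ⟨H, j, rfl⟩
    exact ⟨j, rfl⟩

noncomputable def e4 : XS ≃ Fin 4 := (Equiv.ofBijective f4 f4_bij).symm

def permCongrMul {α β : Type*} (e : α ≃ β) : Perm α ≃* Perm β :=
  { e.permCongr with
    map_mul' := fun p q => by
      ext x
      simp [Equiv.permCongr_apply, Equiv.Perm.mul_apply] }

noncomputable def Ψ : MulAut G0 →* Perm (Fin 4) :=
  (permCongrMul e4).toMonoidHom.comp (MulAction.toPermHom (MulAut G0) XS)

theorem e4_symm (i : Fin 4) : e4.symm i = f4 i := rfl

theorem Psi_apply (φ : MulAut G0) (i : Fin 4) : Ψ φ i = e4 (φ • f4 i) := rfl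

theorem Psi_eq (φ : MulAut G0) (σ : Perm (Fin 4)) (h : ∀ i, φ • PP i = PP (σ i)) :
    Ψ φ = σ := by
  refine Equiv.ext fun i => ?_
  rw [Psi_apply]
  have h2 : φ • f4 i = f4 (σ i) := Subtype.ext (h i)
  rw [h2]
  unfold e4
  exact Equiv.symm_apply_apply (Equiv.ofBijective f4 f4_bij) (σ i)

theorem closure_ts : Subgroup.closure ({tt, ss} : Set G0) = ⊤ := by
  rw [eq_top_iff]
  rintro z -
  have ht : tt ∈ Subgroup.closure ({tt, ss} : Set G0) :=
    Subgroup.subset_closure (by simp)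
  have hs : ss ∈ Subgroup.closure ({tt, ss} : Set G0) :=
    Subgroup.subset_closure (by simp)
  have hti := inv_mem ht
  have hsi := inv_mem hs
  have key : ∀ z : G0, z = 1 ∨
      z = tt ∨
      z = tt⁻¹ ∨
      z = ss * tt⁻¹ ∨
      z = ss ∨
      z = ss * tt ∨
      z = tt * ss⁻¹ * tt * ss⁻¹ ∨
      z = ss * tt⁻¹ * ss ∨
      z = ss⁻¹ * tt * ss⁻¹ ∨
      z = tt * ss⁻¹ ∨
      z = tt * ss⁻¹ * tt ∨
      z = tt * ss⁻¹ * tt⁻¹ ∨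
      z = tt * ss * tt ∨
      z = tt * ss * tt⁻¹ ∨
      z = tt * ss ∨
      z = tt⁻¹ * ss ∨
      z = ss * tt * ss⁻¹ ∨
      z = tt⁻¹ * ss * tt⁻¹ ∨
      z = tt⁻¹ * ss⁻¹ * tt⁻¹ ∨
      z = tt⁻¹ * ss⁻¹ ∨
      z = ss * tt⁻¹ * ss⁻¹ ∨
      z = ss⁻¹ * tt ∨
      z = ss⁻¹ * tt⁻¹ ∨
      z = ss⁻¹ := by decide
  rcases key z with rfl|rfl|rfl|rfl|rfl|rfl|rfl|rfl|rfl|rfl|rfl|rfl|rfl|rfl|rfl|rfl|rfl|rfl|rfl|rfl|rfl|rfl|rfl|rfl <;>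
    repeat' (first | exact ht | exact hs | exact hti | exact hsi | exact one_mem _ | apply mul_mem)

theorem Psi_fix {φ : MulAut G0} (hφ : Ψ φ = 1) (i : Fin 4) : φ • PP i = PP i := by
  have h1 : Ψ φ i = i := by rw [hφ]; rfl
  rw [Psi_apply] at h1
  have h2 : φ • f4 i = f4 i := by
    apply e4.injective
    rw [h1]
    unfold e4
    exact (Equiv.symm_apply_apply (Equiv.ofBijective f4 f4_bij) i).symm
  exact congrArg Subtype.val h2

theorem mem_of_fix {φ : MulAut G0} (h : φ • PP i = PP i) {x : G0} (hx : x ∈ PP i) :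
    φ x ∈ PP i := by
  rw [← h]
  have := Subgroup.smul_mem_pointwise_smul x φ (PP i) hx
  rwa [MulAut.smul_def] at this

theorem Psi_inj : Function.Injective Ψ := by
  rw [injective_iff_map_eq_one]
  intro φ hφ
  have htt : φ tt ∈ PP 0 := mem_of_fix (Psi_fix hφ 0) (by decide)
  have hss : φ ss ∈ PP 1 := mem_of_fix (Psi_fix hφ 1) (by decide)
  have hrr : φ rr ∈ PP 2 := mem_of_fix (Psi_fix hφ 2) (by decide)
  have hww : φ ww ∈ PP 3 := mem_of_fix (Psi_fix hφ 3) (by decide)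
  have hrrv : φ rr = φ tt * φ ss * (φ tt)⁻¹ := by
    rw [show rr = tt * ss * tt⁻¹ from by decide, map_mul, map_mul, map_inv]
  have hwwv : φ ww = φ ss * φ tt * (φ ss)⁻¹ := by
    rw [show ww = ss * tt * ss⁻¹ from by decide, map_mul, map_mul, map_inv]
  have htne : φ tt ≠ 1 := fun h =>
    (by decide : tt ≠ (1 : G0)) (φ.injective (h.trans (map_one φ).symm))
  have hsne : φ ss ≠ 1 := fun h =>
    (by decide : ss ≠ (1 : G0)) (φ.injective (h.trans (map_one φ).symm))
  have htv : φ tt = tt ∨ φ tt = gen 0 * gen 0 := (mem_PP.mp htt).resolve_left htne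
  have hsv : φ ss = ss ∨ φ ss = gen 1 * gen 1 := (mem_PP.mp hss).resolve_left hsne
  have hgen0 : gen 0 = tt := rfl
  have hgen1 : gen 1 = ss := rfl
  rw [hgen0] at htv
  rw [hgen1] at hsv
  rcases htv with ht1 | ht2
  · rcases hsv with hs1 | hs2
    · -- φ = 1
      have hz : ∀ z : G0, z ∈ Subgroup.closure ({tt, ss} : Set G0) → φ z = z := by
        intro z hzc
        induction hzc using Subgroup.closure_induction with
        | mem x hx =>
          rcases hx with rfl | hx
          · exact ht1
          · rw [Set.mem_singleton_iff] at hx; rw [hx]; exact hs1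
        | one => exact map_one φ
        | mul x y _ _ ihx ihy => rw [map_mul, ihx, ihy]
        | inv x _ ihx => rw [map_inv, ihx]
      exact MulEquiv.ext fun z => hz z (by rw [closure_ts]; trivial)
    · exfalso
      rw [ht1, hs2] at hwwv
      rw [hwwv] at hww
      exact (by decide : ¬ ((ss * ss) * tt * (ss * ss)⁻¹ ∈ PP 3)) hww
  · rcases hsv with hs1 | hs2
    · exfalso
      rw [ht2, hs1] at hrrv
      rw [hrrv] at hrr
      exact (by decide : ¬ ((tt * tt) * ss * (tt * tt)⁻¹ ∈ PP 2)) hrr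
    · exfalso
      rw [ht2, hs2] at hrrv
      rw [hrrv] at hrr
      exact (by decide : ¬ ((tt * tt) * (ss * ss) * (tt * tt)⁻¹ ∈ PP 2)) hrr

theorem mem_range_of (φ : MulAut G0) (σ : Perm (Fin 4)) (h : ∀ i, φ • PP i = PP (σ i)) :
    σ ∈ Ψ.range := ⟨φ, Psi_eq φ σ h⟩

def L4 : Finset (Perm (Fin 4)) :=
  {1, Equiv.swap 1 2 * Equiv.swap 2 3, Equiv.swap 1 2 * Equiv.swap 1 3,
   Equiv.swap 0 3 * Equiv.swap 1 2, Equiv.swap 0 2 * Equiv.swap 0 3,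
   Equiv.swap 0 1 * Equiv.swap 0 3, Equiv.swap 0 1 * Equiv.swap 2 3,
   Equiv.swap 0 1 * Equiv.swap 1 3, Equiv.swap 0 1 * Equiv.swap 1 2,
   Equiv.swap 0 2 * Equiv.swap 1 3, Equiv.swap 0 1 * Equiv.swap 0 2,
   Equiv.swap 0 2 * Equiv.swap 2 3, Equiv.swap 1 2}

theorem L4_card : L4.card = 13 := by decide

theorem L4_sub : ∀ σ ∈ L4, σ ∈ Ψ.range := by
  intro σ hσ
  simp only [L4, Finset.mem_insert, Finset.mem_singleton] at hσ
  rcases hσ with rfl|rfl|rfl|rfl|rfl|rfl|rfl|rfl|rfl|rfl|rfl|rfl|rfl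
  · exact ⟨1, map_one Ψ⟩
  · exact mem_range_of (MulAut.conj (E (.a 0) 1)) _
      (by intro i; fin_cases i <;> exact smul_PP_eq _ (by decide))
  · exact mem_range_of (MulAut.conj (E (.a 0) 2)) _
      (by intro i; fin_cases i <;> exact smul_PP_eq _ (by decide))
  · exact mem_range_of (MulAut.conj (E (.a 1) 0)) _
      (by intro i; fin_cases i <;> exact smul_PP_eq _ (by decide))
  · exact mem_range_of (MulAut.conj (E (.a 1) 1)) _
      (by intro i; fin_cases i <;> exact smul_PP_eq _ (by decide))
  · exact mem_range_of (MulAut.conj (E (.a 1) 2)) _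
      (by intro i; fin_cases i <;> exact smul_PP_eq _ (by decide))
  · exact mem_range_of (MulAut.conj (E (.xa 0) 0)) _
      (by intro i; fin_cases i <;> exact smul_PP_eq _ (by decide))
  · exact mem_range_of (MulAut.conj (E (.xa 0) 1)) _
      (by intro i; fin_cases i <;> exact smul_PP_eq _ (by decide))
  · exact mem_range_of (MulAut.conj (E (.xa 0) 2)) _
      (by intro i; fin_cases i <;> exact smul_PP_eq _ (by decide))
  · exact mem_range_of (MulAut.conj (E (.xa 1) 0)) _
      (by intro i; fin_cases i <;> exact smul_PP_eq _ (by decide))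
  · exact mem_range_of (MulAut.conj (E (.xa 1) 1)) _
      (by intro i; fin_cases i <;> exact smul_PP_eq _ (by decide))
  · exact mem_range_of (MulAut.conj (E (.xa 1) 2)) _
      (by intro i; fin_cases i <;> exact smul_PP_eq _ (by decide))
  · exact mem_range_of beta _
      (by intro i; fin_cases i <;> exact smul_PP_eq _ (by decide))

theorem range_card13 : 13 ≤ Nat.card Ψ.range := by
  have hinj : Function.Injective
      (fun x : {y // y ∈ L4} => (⟨x.1, L4_sub x.1 x.2⟩ : Ψ.range)) := by
    intro a b h
    simp only [Subtype.mk.injEq] at h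
    exact Subtype.ext h
  calc (13 : ℕ) = Nat.card {y // y ∈ L4} := by
        rw [Nat.card_eq_fintype_card, Fintype.card_coe, L4_card]
    _ ≤ Nat.card Ψ.range := Nat.card_le_card_of_injective _ hinj

theorem Psi_surj : Function.Surjective Ψ := by
  rw [← MonoidHom.range_eq_top]
  have h24 : Nat.card (Perm (Fin 4)) = 24 := by
    rw [Nat.card_eq_fintype_card]; decide
  have hdvd := Subgroup.card_subgroup_dvd_card Ψ.range
  rw [h24] at hdvd
  have h13 := range_card13
  obtain ⟨c, hc⟩ := hdvd
  have hcard : Nat.card Ψ.range = 24 := by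
    rcases Nat.lt_or_ge c 2 with h | h
    · interval_cases c
      · rw [mul_zero] at hc; omega
      · rw [mul_one] at hc; omega
    · exfalso
      have h26 : 13 * 2 ≤ Nat.card Ψ.range * c := Nat.mul_le_mul h13 h
      omega
  exact Subgroup.eq_top_of_card_eq _ (by rw [hcard, h24])

noncomputable def Iso0 : MulAut G0 ≃* Perm (Fin 4) :=
  MulEquiv.ofBijective Ψ ⟨Psi_inj, Psi_surj⟩

-- ## Part 2: all order-3 automorphisms give isomorphic semidirect products

instance : Finite (MulAut Q8) :=
  Finite.of_injective (fun f => (f : Q8 → Q8)) DFunLike.coe_injective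

theorem orderOf_u0 : orderOf u0 = 3 := orderOf_eq_prime u0_pow3 (by decide)

def fb0 : Q8 → Q8 := fun x =>
  match x with
  | .a i => .a i
  | .xa i => .xa (i + 1)

def gb0 : Q8 → Q8 := fun x =>
  match x with
  | .a i => .a i
  | .xa i => .xa (i - 1)

def b0 : MulAut Q8 :=
  { toFun := fb0
    invFun := gb0
    left_inv := fun x => (by decide : ∀ x, gb0 (fb0 x) = x) x
    right_inv := fun x => (by decide : ∀ x, fb0 (gb0 x) = x) x
    map_mul' := by decide }

theorem orderOf_b0 : orderOf b0 = 4 := by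
  have h4 : b0 ^ (4 : ℕ) = 1 := by decide
  have hdvd : orderOf b0 ∣ 2 ^ 2 := orderOf_dvd_of_pow_eq_one h4
  obtain ⟨k, hk, hord⟩ := (Nat.dvd_prime_pow Nat.prime_two).mp hdvd
  interval_cases k
  · exfalso
    rw [pow_zero, orderOf_eq_one_iff] at hord
    exact (by decide : b0 ≠ 1) hord
  · exfalso
    have := pow_orderOf_eq_one b0
    rw [hord] at this
    exact (by decide : b0 ^ (2:ℕ) ≠ 1) (by rw [← this]; norm_num)
  · rw [hord]; norm_num

theorem q8_words : ∀ z : Q8, z = 1 ∨ z = .a 1 ∨ z = .a 1 * .a 1 ∨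
    z = .a 1 * (.a 1 * .a 1) ∨ z = .xa 0 ∨ z = .xa 0 * .a 1 ∨
    z = .xa 0 * (.a 1 * .a 1) ∨ z = .xa 0 * (.a 1 * (.a 1 * .a 1)) := by decide

theorem mulAut_ext {φ ψ : MulAut Q8} (ha : φ (.a 1) = ψ (.a 1))
    (hx : φ (.xa 0) = ψ (.xa 0)) : φ = ψ := by
  apply MulEquiv.ext
  intro z
  rcases q8_words z with rfl|rfl|rfl|rfl|rfl|rfl|rfl|rfl <;>
    simp only [map_mul, map_one, ha, hx]

abbrev T24 := {p : Q8 × Q8 // p.1 * p.1 = .a 2 ∧ p.2 * p.2 = .a 2 ∧ p.2 ≠ p.1 ∧ p.2 ≠ p.1⁻¹}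

theorem aut_apply_a2 (φ : MulAut Q8) : φ (.a 2) = .a 2 := by
  have h1 : φ (.a 2) * φ (.a 2) = 1 := by
    rw [← map_mul, show (QuaternionGroup.a 2 : Q8) * .a 2 = 1 from by decide, map_one]
  have h2 : φ (.a 2) ≠ 1 := fun h =>
    (by decide : (QuaternionGroup.a 2 : Q8) ≠ 1) (φ.injective (h.trans (map_one φ).symm))
  exact (by decide : ∀ z : Q8, z * z = 1 → z ≠ 1 → z = .a 2) _ h1 h2

def ev (φ : MulAut Q8) : T24 :=
  ⟨(φ (.a 1), φ (.xa 0)), by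
    refine ⟨?_, ?_, ?_, ?_⟩
    · rw [← map_mul, show (QuaternionGroup.a 1 : Q8) * .a 1 = .a 2 from by decide]
      exact aut_apply_a2 φ
    · rw [← map_mul, show (QuaternionGroup.xa 0 : Q8) * .xa 0 = .a 2 from by decide]
      exact aut_apply_a2 φ
    · exact fun h => (by decide : (QuaternionGroup.xa 0 : Q8) ≠ .a 1) (φ.injective h)
    · intro h
      rw [← map_inv] at h
      exact (by decide : (QuaternionGroup.xa 0 : Q8) ≠ (.a 1)⁻¹) (φ.injective h)⟩

theorem ev_inj : Function.Injective ev := by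
  intro φ ψ h
  have h1 : φ (.a 1) = ψ (.a 1) := congrArg (fun p => p.1.1) h
  have h2 : φ (.xa 0) = ψ (.xa 0) := congrArg (fun p => p.1.2) h
  exact mulAut_ext h1 h2

theorem cardA_le : Nat.card (MulAut Q8) ≤ 24 := by
  have h := Nat.card_le_card_of_injective ev ev_inj
  have hT : Nat.card T24 = 24 := by rw [Nat.card_eq_fintype_card]; decide
  omega

theorem hfact3 : (Nat.card (MulAut Q8)).factorization 3 = 1 := by
  have h3 : 3 ∣ Nat.card (MulAut Q8) := orderOf_u0 ▸ orderOf_dvd_natCard u0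
  have h4 : 4 ∣ Nat.card (MulAut Q8) := orderOf_b0 ▸ orderOf_dvd_natCard b0
  have h12 : 12 ∣ Nat.card (MulAut Q8) :=
    Nat.Coprime.mul_dvd_of_dvd_of_dvd (by norm_num) h3 h4
  have hle : Nat.card (MulAut Q8) ≤ 24 := cardA_le
  haveI : Nonempty (MulAut Q8) := ⟨1⟩
  have hn0 : Nat.card (MulAut Q8) ≠ 0 := Nat.card_pos.ne'
  have h9 : ¬ (3 ^ 2 ∣ Nat.card (MulAut Q8)) := by
    obtain ⟨c, hc⟩ := h12
    rintro ⟨d, hd⟩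
    omega
  have hge : 1 ≤ (Nat.card (MulAut Q8)).factorization 3 :=
    (Nat.Prime.pow_dvd_iff_le_factorization (by norm_num) hn0).mp (by simpa using h3)
  have hlt : ¬ 2 ≤ (Nat.card (MulAut Q8)).factorization 3 := fun h =>
    h9 ((Nat.Prime.pow_dvd_iff_le_factorization (by norm_num) hn0).mpr h)
  omega

theorem sylow_conj (u : MulAut Q8) (hu : orderOf u = 3) :
    ∃ g : MulAut Q8, ∀ h : MulAut Q8, h ∈ zpowers u ↔ g⁻¹ * h * g ∈ zpowers u0 := by
  haveI : Fact (Nat.Prime 3) := ⟨by norm_num⟩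
  let Pu : Sylow 3 (MulAut Q8) := Sylow.ofCard (zpowers u)
    (by rw [Nat.card_zpowers, hu, hfact3, pow_one])
  let P0' : Sylow 3 (MulAut Q8) := Sylow.ofCard (zpowers u0)
    (by rw [Nat.card_zpowers, orderOf_u0, hfact3, pow_one])
  obtain ⟨g, hg⟩ := MulAction.exists_smul_eq (MulAut Q8) P0' Pu
  refine ⟨g, fun h => ?_⟩
  have hsub : MulAut.conj g • (zpowers u0 : Subgroup (MulAut Q8)) = zpowers u := by
    have h1 : ((g • P0' : Sylow 3 (MulAut Q8)) : Subgroup (MulAut Q8)) = zpowers u := by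
      rw [hg]; rfl
    rw [Sylow.smul_def, Sylow.pointwise_smul_def] at h1
    exact h1
  rw [← hsub, Subgroup.mem_pointwise_smul_iff_inv_smul_mem]
  have happ : (MulAut.conj g)⁻¹ • h = g⁻¹ * h * g := MulAut.conj_inv_apply g h
  rw [happ]

theorem semidirect_iso (u : MulAut Q8) (g : MulAut Q8)
    (key : ∀ h : MulAut Q8, h ∈ zpowers u ↔ g⁻¹ * h * g ∈ zpowers u0) :
    Nonempty (SemidirectProduct Q8 ↥(zpowers u) (zpowers u).subtype ≃* G0) := by
  refine ⟨{ toFun := fun z => ⟨g⁻¹ z.left, ⟨g⁻¹ * z.right.1 * g, (key _).mp z.right.2⟩⟩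
            invFun := fun z => ⟨g z.left, ⟨g * z.right.1 * g⁻¹, (key _).mpr (by
              have harr : g⁻¹ * (g * z.right.1 * g⁻¹) * g = z.right.1 := by group
              rw [harr]; exact z.right.2)⟩⟩
            left_inv := ?_
            right_inv := ?_
            map_mul' := ?_ }
          ⟩
  · intro z
    refine SemidirectProduct.ext ?_ (Subtype.ext ?_)
    · show g (g⁻¹ z.left) = z.left
      rw [MulAut.inv_def, MulEquiv.apply_symm_apply]
    · show g * (g⁻¹ * z.right.1 * g) * g⁻¹ = z.right.1
      group
  · intro z
    refine SemidirectProduct.ext ?_ (Subtype.ext ?_)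
    · show g⁻¹ (g z.left) = z.left
      rw [MulAut.inv_def, MulEquiv.symm_apply_apply]
    · show g⁻¹ * (g * z.right.1 * g⁻¹) * g = z.right.1
      group
  · intro x y
    refine SemidirectProduct.ext ?_ (Subtype.ext ?_)
    · show g⁻¹ ((x * y).left) = _
      rw [SemidirectProduct.mul_left, SemidirectProduct.mul_left]
      show g⁻¹ (x.left * x.right.1 y.left) =
        g⁻¹ x.left * (g⁻¹ * x.right.1 * g) (g⁻¹ y.left)
      rw [map_mul]
      congr 1
      rw [MulAut.mul_apply, MulAut.mul_apply, MulAut.inv_def, MulEquiv.apply_symm_apply]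
    · show g⁻¹ * ((x * y).right).1 * g = _
      rw [SemidirectProduct.mul_right]
      show g⁻¹ * (x.right.1 * y.right.1) * g = (g⁻¹ * x.right.1 * g) * (g⁻¹ * y.right.1 * g)
      group

/-- For an automorphism `u` of order 3 of `Q₈` and `G = Q₈ ⋊ ⟨u⟩`,
the automorphism group of `G` is isomorphic to `Sym(4)`. -/
theorem mulAut_q8_semidirect_iso_perm_four
    (u : MulAut (QuaternionGroup 2)) (hu : orderOf u = 3) :
    Nonempty (MulAut (SemidirectProduct (QuaternionGroup 2)
      ↥(Subgroup.zpowers u) ((Subgroup.zpowers u).subtype)) ≃* Equiv.Perm (Fin 4)) := by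
  obtain ⟨g, key⟩ := sylow_conj u hu
  obtain ⟨e⟩ := semidirect_iso u g key
  exact ⟨(MulAut.congr e).trans Iso0⟩
end

section
/- Let u be an automorphism of order 3 of the quaternion group Q_8, and let G = Q_8 ⋊ ⟨u⟩. Then the inner automorphism group of G, i.e. the quotient G / Z(G) of G by its center, is isomorphic to the alternating group Alt(4). -/
/-!
Write `G = Q₈ ⋊ ⟨u⟩`. A central element `(q, v)` of `G` acts on `Q₈` by `v = conj q⁻¹`; inner
automorphisms of `Q₈` are involutions while `v³ = 1`, so `v = 1` and `Z(G) = Z(Q₈) = {±1}`.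
Thus `G ⧸ Z(G)` has order 12. The image `s` of `u` there has order 3 and `⟨s⟩` is not normal: a
conjugate of `s` by `x ∈ Q₈` has the same image as `s` in `⟨u⟩`, so if it lies in `⟨s⟩` it equals
`s`, which makes `x⁻¹ u(x)` central; this cannot hold for every `x` since `u² ≠ 1`. Finally a
group of order 12 with a non-normal subgroup `H` of order 3 acts faithfully on the four cosets of
`H`, and its image in `S₄` has index 2, hence is `A₄`.
-/

open Subgroup SemidirectProduct QuaternionGroup

theorem eq_of_mem_zpowers_of_map_eq {G K : Type*} [Group G] [Group K] (f : G →* K) {s t : G}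
    (hs : orderOf s ∣ orderOf (f s)) (ht : t ∈ zpowers s) (hft : f t = f s) : t = s := by
  obtain ⟨k, rfl⟩ := mem_zpowers_iff.mp ht
  have hk : f s ^ (k - 1) = 1 := by rw [zpow_sub_one, ← map_zpow, hft, mul_inv_cancel]
  have hk' : s ^ (k - 1) = 1 :=
    orderOf_dvd_iff_zpow_eq_one.mp ((Int.natCast_dvd_natCast.mpr hs).trans
      (orderOf_dvd_iff_zpow_eq_one.mpr hk))
  rw [← sub_add_cancel k 1, zpow_add_one, hk', one_mul]

theorem Subgroup.normalCore_eq_bot_of_card_prime {G : Type*} [Group G] {K : Subgroup G}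
    (hK : (Nat.card K).Prime) (hnormal : ¬ K.Normal) : K.normalCore = ⊥ := by
  have : Finite K := Nat.finite_of_card_ne_zero hK.ne_zero
  rcases (Nat.dvd_prime hK).mp (card_dvd_of_le K.normalCore_le) with h | h
  · exact card_eq_one.mp h
  · exact absurd (eq_of_le_of_card_ge K.normalCore_le h.ge ▸ K.normalCore_normal) hnormal

theorem nonempty_mulEquiv_alternatingGroup_of_injective {G α : Type*} [Group G] [Fintype α]
    [DecidableEq α] {f : G →* Equiv.Perm α} (hf : Function.Injective f)
    (hcard : 2 * Nat.card G = Nat.card (Equiv.Perm α)) :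
    Nonempty (G ≃* alternatingGroup α) := by
  have hindex : f.range.index = 2 := by
    have hG : Nat.card G ≠ 0 := fun h => Nat.card_pos.ne' (by rw [← hcard, h])
    have := f.range.card_mul_index
    rw [← Nat.card_congr (MonoidHom.ofInjective hf).toEquiv, ← hcard, mul_comm 2] at this
    exact Nat.eq_of_mul_eq_mul_left (Nat.pos_of_ne_zero hG) this
  exact ⟨(MonoidHom.ofInjective hf).trans
    (MulEquiv.subgroupCongr (Equiv.Perm.eq_alternatingGroup_of_index_eq_two hindex))⟩

theorem nonempty_mulEquiv_alternatingGroup_fin_four {G : Type*} [Group G] (hG : Nat.card G = 12)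
    {K : Subgroup G} (hK : Nat.card K = 3) (hnormal : ¬ K.Normal) :
    Nonempty (G ≃* alternatingGroup (Fin 4)) := by
  have hindex : Nat.card (G ⧸ K) = 4 := by
    have := K.card_eq_card_quotient_mul_card_subgroup
    rw [hG, hK] at this
    omega
  have : Finite (G ⧸ K) := Nat.finite_of_card_ne_zero (by omega)
  let e := (Finite.equivFinOfCardEq hindex).permCongrHom
  refine nonempty_mulEquiv_alternatingGroup_of_injective
    (f := e.toMonoidHom.comp (MulAction.toPermHom G (G ⧸ K))) (e.injective.comp ?_) ?_
  · rw [← MonoidHom.ker_eq_bot_iff, ← normalCore_eq_ker]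
    exact normalCore_eq_bot_of_card_prime (hK ▸ Nat.prime_three) hnormal
  · rw [hG, Nat.card_perm, Nat.card_fin]
    rfl

namespace SemidirectProduct

variable {N H : Type*} [Group N] [Group H] {φ : H →* MulAut N}

theorem left_mul_apply_right_of_mem_center {g : N ⋊[φ] H} (hg : g ∈ center (N ⋊[φ] H))
    (x : N) : g.left * φ g.right x = x * g.left := by
  simpa using (congrArg left (mem_center_iff.mp hg (inl x))).symm

theorem mem_center_of_inl_mem_center {n : N} (hn : inl n ∈ center (N ⋊[φ] H)) :
    n ∈ center N :=
  mem_center_iff.mpr fun x => by simpa using (left_mul_apply_right_of_mem_center hn x).symm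

theorem inl_mem_center {n : N} (hn : n ∈ center N) (hfix : ∀ h, φ h n = n) :
    inl n ∈ center (N ⋊[φ] H) := by
  refine mem_center_iff.mpr fun g => ?_
  ext
  · simp [hfix, mem_center_iff.mp hn]
  · simp

end SemidirectProduct

namespace QuaternionGroup

theorem eq_one_or_eq_a_two_of_mul_self_eq_one :
    ∀ y : QuaternionGroup 2, y * y = 1 → y = 1 ∨ y = a 2 := by
  decide

theorem mem_center_iff_eq_one_or_eq_a_two (q : QuaternionGroup 2) :
    q ∈ center (QuaternionGroup 2) ↔ q = 1 ∨ q = a 2 := by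
  rw [Subgroup.mem_center_iff]
  revert q
  decide

theorem conj_sq_eq_one (q : QuaternionGroup 2) : MulAut.conj q ^ 2 = 1 := by
  ext x
  simp only [pow_two, MulAut.mul_apply, MulAut.conj_apply, MulAut.one_apply]
  revert q x
  decide

theorem mulAut_apply_a_two (w : MulAut (QuaternionGroup 2)) : w (a 2) = a 2 := by
  refine (eq_one_or_eq_a_two_of_mul_self_eq_one _ ?_).resolve_left ?_
  · rw [← map_mul, a_mul_a, map_eq_one_iff _ w.injective]
    decide
  · rw [map_eq_one_iff _ w.injective]
    decide

theorem sq_eq_one_of_forall_inv_mul_apply_mem_center (w : MulAut (QuaternionGroup 2))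
    (h : ∀ y, y⁻¹ * w y ∈ center (QuaternionGroup 2)) : w ^ 2 = 1 := by
  ext y
  rw [pow_two, MulAut.mul_apply, MulAut.one_apply]
  rcases (mem_center_iff_eq_one_or_eq_a_two _).mp (h y) with hy | hy
  · have hfix : w y = y := (inv_mul_eq_one.mp hy).symm
    rw [hfix, hfix]
  · have hsign : w y = y * a 2 := inv_mul_eq_iff_eq_mul.mp hy
    rw [hsign, map_mul, hsign, mulAut_apply_a_two, mul_assoc, a_mul_a]
    exact mul_one y

end QuaternionGroup

abbrev Q8Semidirect (u : MulAut (QuaternionGroup 2)) : Type :=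
  QuaternionGroup 2 ⋊[(zpowers u).subtype] zpowers u

namespace Q8Semidirect

variable {u : MulAut (QuaternionGroup 2)}

theorem mem_center_iff (hu : orderOf u = 3) {g : Q8Semidirect u} :
    g ∈ center (Q8Semidirect u) ↔ g = 1 ∨ g = inl (a 2) := by
  refine ⟨fun hg => ?_, ?_⟩
  · have hcomm := left_mul_apply_right_of_mem_center hg
    have hconj : (g.right : MulAut (QuaternionGroup 2)) = MulAut.conj g.left⁻¹ := by
      ext x
      rw [MulAut.conj_apply, inv_inv, mul_assoc, ← hcomm x, inv_mul_cancel_left]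
      rfl
    have hright : g.right = 1 := by
      have h2 : g.right ^ 2 = 1 := Subtype.ext (by simp [hconj, conj_sq_eq_one])
      have h3 : g.right ^ 3 = 1 := by rw [← hu, ← Nat.card_zpowers]; exact pow_card_eq_one'
      calc g.right = g.right ^ 3 * (g.right ^ 2)⁻¹ := by group
        _ = 1 := by rw [h2, h3, inv_one, one_mul]
    have hleft : g.left ∈ center (QuaternionGroup 2) :=
      Subgroup.mem_center_iff.mpr fun x => by simpa [hright] using (hcomm x).symm
    rcases (mem_center_iff_eq_one_or_eq_a_two _).mp hleft with h | h
    · left; ext <;> simp [h, hright]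
    · right; ext <;> simp [h, hright]
  · rintro (rfl | rfl)
    · exact one_mem _
    · exact inl_mem_center ((mem_center_iff_eq_one_or_eq_a_two _).mpr (.inr rfl))
        fun v => mulAut_apply_a_two v

theorem card_center (hu : orderOf u = 3) : Nat.card (center (Q8Semidirect u)) = 2 := by
  have hcenter : (center (Q8Semidirect u) : Set (Q8Semidirect u)) = {1, inl (a 2)} :=
    Set.ext fun g => mem_center_iff hu
  rw [← SetLike.coe_sort_coe, hcenter, Nat.card_coe_set_eq, Set.ncard_pair]
  rw [ne_eq, eq_comm, map_eq_one_iff _ inl_injective]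
  decide

theorem card_quotient_center (hu : orderOf u = 3) :
    Nat.card (Q8Semidirect u ⧸ center (Q8Semidirect u)) = 12 := by
  have := (center (Q8Semidirect u)).card_eq_card_quotient_mul_card_subgroup
  rw [SemidirectProduct.card, Nat.card_eq_fintype_card, QuaternionGroup.card, Nat.card_zpowers,
    hu, card_center hu] at this
  omega

theorem center_le_ker_rightHom (hu : orderOf u = 3) :
    center (Q8Semidirect u) ≤ (rightHom : Q8Semidirect u →* zpowers u).ker := by
  intro g hg
  rcases (mem_center_iff hu).mp hg with rfl | rfl <;> simp

abbrev generatorModCenter (u : MulAut (QuaternionGroup 2)) :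
    Q8Semidirect u ⧸ center (Q8Semidirect u) :=
  QuotientGroup.mk (inr ⟨u, mem_zpowers u⟩)

def rightModCenter (hu : orderOf u = 3) : Q8Semidirect u ⧸ center (Q8Semidirect u) →* zpowers u :=
  QuotientGroup.lift _ rightHom (center_le_ker_rightHom hu)

@[simp]
theorem rightModCenter_mk (hu : orderOf u = 3) (g : Q8Semidirect u) :
    rightModCenter hu g = g.right :=
  rfl

theorem orderOf_generatorModCenter (hu : orderOf u = 3) : orderOf (generatorModCenter u) = 3 := by
  have : Fact (Nat.Prime 3) := ⟨Nat.prime_three⟩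
  refine orderOf_eq_prime ?_ fun h => ?_
  · rw [← QuotientGroup.mk_pow, ← map_pow, ← hu, ← orderOf_mk u (mem_zpowers u),
      pow_orderOf_eq_one, map_one, QuotientGroup.mk_one]
  · have := congrArg (rightModCenter hu) h
    rw [rightModCenter_mk, map_one, right_inr] at this
    rw [show u = 1 from congrArg Subtype.val this, orderOf_one] at hu
    omega

theorem not_normal_zpowers_generatorModCenter (hu : orderOf u = 3) :
    ¬ (zpowers (generatorModCenter u)).Normal := by
  intro hnormal
  have hu2 : u ^ 2 ≠ 1 := fun h => by
    have := orderOf_dvd_of_pow_eq_one h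
    rw [hu] at this
    omega
  refine hu2 (sq_eq_one_of_forall_inv_mul_apply_mem_center u fun y => ?_)
  set s := generatorModCenter u
  have hconj : QuotientGroup.mk (inl y⁻¹) * s * (QuotientGroup.mk (inl y⁻¹))⁻¹ = s := by
    refine eq_of_mem_zpowers_of_map_eq (rightModCenter hu) ?_
      (hnormal.conj_mem s (mem_zpowers s) _) (by simp [s])
    rw [orderOf_generatorModCenter hu]
    simp [s, orderOf_mk, hu]
  have hcommutator : (inl (y⁻¹ * u y) : Q8Semidirect u) =
      inl y⁻¹ * inr ⟨u, mem_zpowers u⟩ * (inl y⁻¹)⁻¹ * (inr ⟨u, mem_zpowers u⟩)⁻¹ := by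
    ext <;> simp
  refine mem_center_of_inl_mem_center (φ := (zpowers u).subtype) ?_
  rw [hcommutator, ← QuotientGroup.eq_one_iff, QuotientGroup.mk_mul, QuotientGroup.mk_mul,
    QuotientGroup.mk_mul, QuotientGroup.mk_inv, QuotientGroup.mk_inv, hconj, mul_inv_cancel]

end Q8Semidirect

/-- For an automorphism `u` of order 3 of `Q₈` and `G = Q₈ ⋊ ⟨u⟩`,
the inner automorphism group `G ⧸ Z(G)` of `G` is isomorphic to `Alt(4)`. -/
theorem inn_q8_semidirect_iso_alternating_four
    (u : MulAut (QuaternionGroup 2)) (hu : orderOf u = 3) :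
    Nonempty ((SemidirectProduct (QuaternionGroup 2)
      ↥(Subgroup.zpowers u) ((Subgroup.zpowers u).subtype) ⧸
        Subgroup.center (SemidirectProduct (QuaternionGroup 2)
          ↥(Subgroup.zpowers u) ((Subgroup.zpowers u).subtype)))
      ≃* alternatingGroup (Fin 4)) :=
  nonempty_mulEquiv_alternatingGroup_fin_four (Q8Semidirect.card_quotient_center hu)
    (by rw [Nat.card_zpowers, Q8Semidirect.orderOf_generatorModCenter hu])
    (Q8Semidirect.not_normal_zpowers_generatorModCenter hu)
end

section
/- Let u be an automorphism of order 3 of the quaternion group Q_8, and let G = Q_8 ⋊ ⟨u⟩. Then for any two elements x, y ∈ G of order 3 there exists an automorphism φ of G with φ(x) = y. (In the paper's words: G has only one automorphism class of 3-elements.) -/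
/-!
`G = Q₈ ⋊ ⟨u⟩` has order `24 = 3 · 8`, so every subgroup of order 3 is a Sylow subgroup and all of
them are conjugate. Hence every element of order 3 is conjugate to `c` or `c⁻¹`, where `c` is the
element `u` of the complement. Since `Aut Q₈ ≅ S₄`, every automorphism `u` of order 3 of `Q₈` is
inverted by conjugation with some `f ∈ Aut Q₈`, and then `(n, h) ↦ (f n, h⁻¹)` is an automorphism
of `G` sending `c` to `c⁻¹`.
-/

open Subgroup SemidirectProduct

section Sylow
variable {G : Type*} [Group G] [Finite G] {p : ℕ} [Fact p.Prime]

theorem exists_conj_mem_zpowers_of_sq_not_dvd (hG : ¬ p ^ 2 ∣ Nat.card G) {x y : G}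
    (hx : orderOf x = p) (hy : orderOf y = p) : ∃ g : G, g * x * g⁻¹ ∈ zpowers y := by
  have hfact : (Nat.card G).factorization p = 1 := by
    have hp : p.Prime := Fact.out
    have hdvd : p ^ 1 ∣ Nat.card G := by rw [pow_one, ← hx]; exact orderOf_dvd_natCard x
    rw [hp.pow_dvd_iff_le_factorization Nat.card_pos.ne'] at hdvd hG
    omega
  have hcard : ∀ z : G, orderOf z = p →
      Nat.card (zpowers z) = p ^ (Nat.card G).factorization p :=
    fun z hz => by rw [Nat.card_zpowers, hz, hfact, pow_one]
  obtain ⟨g, hg⟩ := MulAction.exists_smul_eq G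
    (Sylow.ofCard _ (hcard x hx)) (Sylow.ofCard _ (hcard y hy))
  refine ⟨g, ?_⟩
  have hsub := congrArg (fun P : Sylow p G => (P : Subgroup G)) hg
  simp only [Sylow.coe_subgroup_smul, Sylow.coe_ofCard] at hsub
  rw [← hsub]
  exact Subgroup.smul_mem_pointwise_smul x (MulAut.conj g) _ (mem_zpowers x)

end Sylow

section OrderThree
variable {G : Type*} [Group G]

theorem eq_or_eq_inv_of_mem_zpowers_of_orderOf_eq_three {y z : G} (hy : orderOf y = 3)
    (hz : z ∈ zpowers y) (hz1 : z ≠ 1) : z = y ∨ z = y⁻¹ := by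
  obtain ⟨k, rfl⟩ := mem_zpowers_iff.mp hz
  rw [← zpow_mod_orderOf, hy, Nat.cast_ofNat] at hz1 ⊢
  have hy3 : y ^ (2 : ℤ) * y = 1 := by
    rw [← zpow_add_one]; exact_mod_cast (hy ▸ pow_orderOf_eq_one y : y ^ 3 = 1)
  have hk : k % 3 = 0 ∨ k % 3 = 1 ∨ k % 3 = 2 := by omega
  rcases hk with hk | hk | hk <;> simp only [hk] at hz1 ⊢
  · exact absurd (zpow_zero y) hz1
  · exact Or.inl (zpow_one y)
  · exact Or.inr (eq_inv_of_mul_eq_one_left hy3)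

variable [Finite G]

theorem exists_mulAut_apply_eq_of_orderOf_eq_three (hG : ¬ 3 ^ 2 ∣ Nat.card G) {c : G}
    (hc : orderOf c = 3) {Φ : MulAut G} (hΦ : Φ c = c⁻¹) {x y : G} (hx : orderOf x = 3)
    (hy : orderOf y = 3) : ∃ φ : MulAut G, φ x = y := by
  have to_c : ∀ z : G, orderOf z = 3 → ∃ ψ : MulAut G, ψ z = c := by
    intro z hz
    obtain ⟨g, hg⟩ := exists_conj_mem_zpowers_of_sq_not_dvd hG hz hc
    have hg1 : g * z * g⁻¹ ≠ 1 := by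
      rw [Ne, conj_eq_one_iff]; rintro rfl; simp at hz
    rcases eq_or_eq_inv_of_mem_zpowers_of_orderOf_eq_three hc hg hg1 with h | h
    · exact ⟨MulAut.conj g, h⟩
    · refine ⟨Φ * MulAut.conj g, ?_⟩
      rw [MulAut.mul_apply, MulAut.conj_apply, h, map_inv, hΦ, inv_inv]
  obtain ⟨ψx, hψx⟩ := to_c x hx
  obtain ⟨ψy, hψy⟩ := to_c y hy
  exact ⟨ψy⁻¹ * ψx, by rw [MulAut.mul_apply, hψx, ← hψy, MulAut.inv_apply_self]⟩

end OrderThree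

theorem SemiconjBy.inv_of_mem_zpowers {A : Type*} [Group A] {f u g : A}
    (h : SemiconjBy f u u⁻¹) (hg : g ∈ zpowers u) : SemiconjBy f g g⁻¹ := by
  obtain ⟨k, rfl⟩ := mem_zpowers_iff.mp hg
  rw [← inv_zpow]
  exact h.zpow_right k

namespace SemidirectProduct

instance instFinite {N H : Type*} [Group N] [Group H] [Finite N] [Finite H]
    {φ : H →* MulAut N} : Finite (N ⋊[φ] H) :=
  Finite.of_equiv _ equivProd.symm

open scoped IsMulCommutative in
theorem exists_mulAut_inr_eq_inv {N H : Type*} [Group N] [Group H] [IsMulCommutative H]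
    {φ : H →* MulAut N} {f : MulAut N} (hf : ∀ h, SemiconjBy f (φ h) (φ h)⁻¹) :
    ∃ Φ : MulAut (N ⋊[φ] H), ∀ h, Φ (inr h) = (inr h)⁻¹ := by
  refine ⟨congr f (MulEquiv.inv H) fun h => ?_, fun h => ?_⟩
  · ext n
    simpa [map_inv] using DFunLike.congr_fun (hf h) n
  · ext <;> simp

end SemidirectProduct

namespace QuaternionGroup

/-- The only candidate for an endomorphism of `Q₈` with `a 1 ↦ s` and `xa 0 ↦ t`; this reduces
questions about `MulAut Q₈` to a finite search over `(s, t)`. -/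
def ofGenImages (s t : QuaternionGroup 2) : QuaternionGroup 2 → QuaternionGroup 2
  | a i => s ^ i.val
  | xa i => t * s ^ i.val

theorem apply_eq_ofGenImages (f : QuaternionGroup 2 →* QuaternionGroup 2)
    (g : QuaternionGroup 2) : f g = ofGenImages (f (a 1)) (f (xa 0)) g := by
  have a_eq : ∀ i : ZMod (2 * 2), a i = a 1 ^ i.val := by decide
  have xa_eq : ∀ i : ZMod (2 * 2), xa i = xa 0 * a 1 ^ i.val := by decide
  cases g with
  | a i =>
    show f (a i) = f (a 1) ^ i.val
    rw [a_eq i, map_pow]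
  | xa i =>
    show f (xa i) = f (xa 0) * f (a 1) ^ i.val
    rw [xa_eq i, map_mul, map_pow]

/-- The inverting involution can always be taken to send `a 1` to `a 3 = (a 1)⁻¹`, which keeps
the search small. -/
theorem exists_involution_conj_ofGenImages (s t : QuaternionGroup 2)
    (hmul : ∀ x y, ofGenImages s t (x * y) = ofGenImages s t x * ofGenImages s t y)
    (hcube : ∀ x, ofGenImages s t (ofGenImages s t (ofGenImages s t x)) = x) :
    ∃ t', (∀ x y,
        ofGenImages (a 3) t' (x * y) = ofGenImages (a 3) t' x * ofGenImages (a 3) t' y) ∧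
      (∀ x, ofGenImages (a 3) t' (ofGenImages (a 3) t' x) = x) ∧
      ∀ x, ofGenImages (a 3) t' (ofGenImages s t x) =
        ofGenImages s t (ofGenImages s t (ofGenImages (a 3) t' x)) := by
  revert s t; decide

theorem exists_semiconjBy_inv_of_pow_three_eq_one (u : MulAut (QuaternionGroup 2))
    (hu : u ^ 3 = 1) : ∃ f : MulAut (QuaternionGroup 2), SemiconjBy f u u⁻¹ := by
  have hu_eq (x) : u x = ofGenImages (u (a 1)) (u (xa 0)) x :=
    apply_eq_ofGenImages u.toMonoidHom x
  obtain ⟨t, hmul, hinv, hconj⟩ := exists_involution_conj_ofGenImages (u (a 1)) (u (xa 0))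
    (fun x y => by simp only [← hu_eq, map_mul])
    (fun x => by
      simpa only [← hu_eq, pow_succ, pow_zero, one_mul, MulAut.mul_apply, MulAut.one_apply]
        using DFunLike.congr_fun hu x)
  have hu_inv : u⁻¹ = u * u := inv_eq_of_mul_eq_one_right (by rw [← pow_two, ← pow_succ', hu])
  refine ⟨⟨⟨_, _, hinv, hinv⟩, hmul⟩, ?_⟩
  ext x
  have h := hconj x
  simp only [← hu_eq] at h
  simp only [hu_inv, MulAut.mul_apply]
  exact h

end QuaternionGroup

/-- For an automorphism `u` of order 3 of `Q₈` and `G = Q₈ ⋊ ⟨u⟩`,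
any two elements of `G` of order `3` are related by an automorphism of `G`. -/
theorem q8_semidirect_one_aut_class_of_order_three
    (u : MulAut (QuaternionGroup 2)) (hu : orderOf u = 3)
    (x y : SemidirectProduct (QuaternionGroup 2)
      ↥(Subgroup.zpowers u) ((Subgroup.zpowers u).subtype))
    (hx : orderOf x = 3) (hy : orderOf y = 3) :
    ∃ φ : MulAut (SemidirectProduct (QuaternionGroup 2)
      ↥(Subgroup.zpowers u) ((Subgroup.zpowers u).subtype)), φ x = y := by
  obtain ⟨f, hf⟩ :=
    QuaternionGroup.exists_semiconjBy_inv_of_pow_three_eq_one u (hu ▸ pow_orderOf_eq_one u)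
  obtain ⟨Φ, hΦ⟩ := exists_mulAut_inr_eq_inv (φ := (zpowers u).subtype)
    fun h => hf.inv_of_mem_zpowers h.2
  have hcard : Nat.card (QuaternionGroup 2 ⋊[(zpowers u).subtype] zpowers u) = 8 * 3 := by
    rw [SemidirectProduct.card, Nat.card_zpowers, hu, Nat.card_eq_fintype_card,
      QuaternionGroup.card]
  have hc : orderOf (inr ⟨u, mem_zpowers u⟩ :
      QuaternionGroup 2 ⋊[(zpowers u).subtype] zpowers u) = 3 := by
    rw [orderOf_injective _ inr_injective, Subgroup.orderOf_mk, hu]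
  exact exists_mulAut_apply_eq_of_orderOf_eq_three (by rw [hcard]; norm_num) hc (hΦ _) hx hy
end

section
/- Let u be an automorphism of order 3 of the quaternion group Q_8, and let G = Q_8 ⋊ ⟨u⟩. Then every automorphism φ of G such that φ(û) is conjugate in G to û is an inner automorphism of G. (In the paper's notation: Out(Q_8, u) = {1}.) -/
/-!
Conjugating `φ` we may assume it fixes `û`. Since `|Q₈| = 8` and `|⟨u⟩| = 3` are coprime,
every automorphism of `G` maps `Q₈` into itself, so `φ` restricts to an automorphism `v` of `Q₈`,
and `v` commutes with `u` because `φ` fixes `û`. A finite computation on the images of the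
generators shows that the centralizer of an order-3 automorphism of `Q₈` is `⟨u⟩`, so `v = u ^ k`,
and then `φ` agrees with conjugation by `û ^ k` on `Q₈` and on `⟨û⟩`.
-/

namespace SemidirectProduct

variable {N H : Type*} [Group N] [Group H] {φ : H →* MulAut N}

theorem rightHom_aut_inl_eq_one (hNH : (Nat.card N).Coprime (Nat.card H))
    (ψ : MulAut (N ⋊[φ] H)) (x : N) : rightHom (ψ (inl x)) = 1 := by
  rw [← orderOf_eq_one_iff]
  have hdvd : orderOf (rightHom (ψ (inl x))) ∣ Nat.card N :=
    calc orderOf (rightHom (ψ (inl x))) ∣ orderOf (ψ (inl x)) := orderOf_map_dvd _ _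
      _ = orderOf x := by rw [MulEquiv.orderOf_eq, orderOf_injective _ inl_injective]
      _ ∣ Nat.card N := orderOf_dvd_natCard x
  exact (hNH.coprime_dvd_left hdvd).eq_one_of_dvd (orderOf_dvd_natCard _)

theorem inl_left_aut_inl (hNH : (Nat.card N).Coprime (Nat.card H))
    (ψ : MulAut (N ⋊[φ] H)) (x : N) : inl (ψ (inl x)).left = ψ (inl x) := by
  conv_rhs => rw [← inl_left_mul_inr_right (ψ (inl x))]
  rw [← rightHom_eq_right, rightHom_aut_inl_eq_one hNH, map_one, mul_one]

def restrictLeft (hNH : (Nat.card N).Coprime (Nat.card H)) (ψ : MulAut (N ⋊[φ] H)) :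
    MulAut N where
  toFun x := (ψ (inl x)).left
  invFun x := (ψ⁻¹ (inl x)).left
  left_inv x := by simp only [inl_left_aut_inl hNH, MulAut.inv_apply_self, left_inl]
  right_inv x := by simp only [inl_left_aut_inl hNH, MulAut.apply_inv_self, left_inl]
  map_mul' x y := by
    apply inl_injective (φ := φ)
    rw [inl_left_aut_inl hNH, map_mul, map_mul, map_mul, inl_left_aut_inl hNH,
      inl_left_aut_inl hNH]

theorem inl_restrictLeft (hNH : (Nat.card N).Coprime (Nat.card H)) (ψ : MulAut (N ⋊[φ] H))
    (x : N) : inl (restrictLeft hNH ψ x) = ψ (inl x) :=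
  inl_left_aut_inl hNH ψ x

theorem commute_restrictLeft (hNH : (Nat.card N).Coprime (Nat.card H))
    {ψ : MulAut (N ⋊[φ] H)} {h : H} (hψ : ψ (inr h) = inr h) :
    Commute (φ h) (restrictLeft hNH ψ) := by
  ext x
  apply inl_injective (φ := φ)
  simp only [MulAut.mul_apply, inl_aut, inl_restrictLeft, map_mul, map_inv, hψ]

theorem eq_conj_inr_of_restrictLeft_eq [IsMulCommutative H]
    (hNH : (Nat.card N).Coprime (Nat.card H)) {ψ : MulAut (N ⋊[φ] H)} {h₀ : H}
    (hN : restrictLeft hNH ψ = φ h₀) (hH : ∀ h, ψ (inr h) = inr h) :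
    ψ = MulAut.conj (inr h₀) := by
  refine MulEquiv.ext fun g => ?_
  rw [← inl_left_mul_inr_right g, map_mul, map_mul, ← inl_restrictLeft hNH, hN, inl_aut, hH,
    MulAut.conj_apply, MulAut.conj_apply, ← map_inv, ← map_mul, ← map_mul, mul_comm' h₀,
    mul_inv_cancel_right]

end SemidirectProduct

namespace QuaternionGroup

variable {n : ℕ}

/-- The only candidate for a homomorphism with `a 1 ↦ p`, `xa 0 ↦ q`, read off the normal forms
`a i = (a 1) ^ i` and `xa i = (a 1) ^ (-i) * xa 0`. -/
def extendGens {G : Type*} [Monoid G] (p q : G) : QuaternionGroup n → G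
  | a i => p ^ i.val
  | xa i => p ^ (-i).val * q

theorem apply_eq_extendGens [NeZero n] {G : Type*} [Monoid G] (f : QuaternionGroup n →* G)
    (g : QuaternionGroup n) : f g = extendGens (f (a 1)) (f (xa 0)) g := by
  cases g with
  | a i => rw [extendGens, ← map_pow, a_one_pow, ZMod.natCast_zmod_val]
  | xa i =>
    rw [extendGens, ← map_pow, ← map_mul, a_one_pow, ZMod.natCast_zmod_val, a_mul_xa, zero_sub,
      neg_neg]

theorem hom_ext [NeZero n] {G : Type*} [Monoid G] {f g : QuaternionGroup n →* G}
    (ha : f (a 1) = g (a 1)) (hxa : f (xa 0) = g (xa 0)) : f = g :=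
  MonoidHom.ext fun x => by rw [apply_eq_extendGens f, apply_eq_extendGens g, ha, hxa]

/- With `(p, q)` and `(r, s)` the images of `(a 1, xa 0)` under automorphisms `u` and `v`, the
hypotheses say `u ^ 3 = 1`, `u ≠ 1`, `v (a 1)` has order 4 and `u v = v u`; the conclusion is
`v ∈ {1, u, u ^ 2}`. -/
set_option maxRecDepth 10000 in
set_option synthInstance.maxSize 1000 in
theorem extendGens_commute_cases : ∀ p q r s : QuaternionGroup 2,
    extendGens p q (extendGens p q p) = a 1 → extendGens p q (extendGens p q q) = xa 0 →
    (p, q) ≠ (a 1, xa 0) → r * r ≠ 1 →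
    extendGens p q r = extendGens r s p → extendGens p q s = extendGens r s q →
    (r, s) = (a 1, xa 0) ∨ (r, s) = (p, q) ∨ (r, s) = (extendGens p q p, extendGens p q q) := by
  decide

theorem mulAut_mem_zpowers_of_commute {u v : MulAut (QuaternionGroup 2)} (hu : orderOf u = 3)
    (huv : Commute u v) : v ∈ Subgroup.zpowers u := by
  have hval (w : MulAut (QuaternionGroup 2)) (g) : w g = extendGens (w (a 1)) (w (xa 0)) g :=
    apply_eq_extendGens w.toMonoidHom g
  have hext {w w' : MulAut (QuaternionGroup 2)} (ha : w (a 1) = w' (a 1))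
      (hxa : w (xa 0) = w' (xa 0)) : w = w' :=
    MulEquiv.toMonoidHom_injective (hom_ext ha hxa)
  have hcube (g) :
      extendGens (u (a 1)) (u (xa 0)) (extendGens (u (a 1)) (u (xa 0)) (u g)) = g := by
    have := DFunLike.congr_fun (pow_orderOf_eq_one u) g
    rw [hu, pow_three, MulAut.mul_apply, MulAut.mul_apply, MulAut.one_apply] at this
    rwa [← hval, ← hval]
  have hne : (u (a 1), u (xa 0)) ≠ (a 1, xa 0) := by
    intro h
    obtain rfl : u = 1 := hext (Prod.ext_iff.1 h).1 (Prod.ext_iff.1 h).2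
    simp at hu
  have hsq : v (a 1) * v (a 1) ≠ 1 := by
    rw [← map_mul, map_ne_one_iff v v.injective]; decide
  have hcomm (g) :
      extendGens (u (a 1)) (u (xa 0)) (v g) = extendGens (v (a 1)) (v (xa 0)) (u g) := by
    rw [← hval, ← hval, ← MulAut.mul_apply, huv.eq, MulAut.mul_apply]
  rcases extendGens_commute_cases _ _ _ _ (hcube _) (hcube _) hne hsq (hcomm _) (hcomm _)
    with h | h | h <;> simp only [Prod.mk.injEq] at h
  · rw [hext (w' := 1) h.1 h.2]; exact one_mem _
  · rw [hext h.1 h.2]; exact Subgroup.mem_zpowers u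
  · rw [← hval, ← hval] at h
    have hv : v = u ^ 2 := hext (by rw [pow_two]; exact h.1) (by rw [pow_two]; exact h.2)
    exact hv ▸ Subgroup.npow_mem_zpowers u 2

end QuaternionGroup

open SemidirectProduct QuaternionGroup

/-- For an automorphism `u` of order 3 of `Q₈` and `G = Q₈ ⋊ ⟨u⟩`, every automorphism
`φ` of `G` sending `û` to a `G`-conjugate of `û` is inner; i.e. `Out(Q₈, u) = 1`. -/
theorem out_q8_pair_trivial
    (u : MulAut (QuaternionGroup 2)) (hu : orderOf u = 3)
    (φ : MulAut (SemidirectProduct (QuaternionGroup 2)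
      ↥(Subgroup.zpowers u) ((Subgroup.zpowers u).subtype)))
    (hφ : IsConj
      (φ (SemidirectProduct.inr ⟨u, Subgroup.mem_zpowers u⟩))
      (SemidirectProduct.inr ⟨u, Subgroup.mem_zpowers u⟩)) :
    ∃ g : SemidirectProduct (QuaternionGroup 2)
      ↥(Subgroup.zpowers u) ((Subgroup.zpowers u).subtype),
      ∀ x, φ x = g * x * g⁻¹ := by
  set u₀ : Subgroup.zpowers u := ⟨u, Subgroup.mem_zpowers u⟩
  obtain ⟨c, hc⟩ := isConj_iff.1 hφ
  set ψ := MulAut.conj c * φ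
  have hψ : ψ (inr u₀) = inr u₀ := by rw [MulAut.mul_apply, MulAut.conj_apply, hc]
  have hψH : ∀ h, ψ (inr h) = inr h := Subgroup.forall_zpowers.2 fun m => by
    rw [show (⟨u ^ m, m, rfl⟩ : Subgroup.zpowers u) = u₀ ^ m from rfl, map_zpow, map_zpow, hψ]
  have hcop : (Nat.card (QuaternionGroup 2)).Coprime (Nat.card (Subgroup.zpowers u)) := by
    rw [Nat.card_zpowers, hu, Nat.card_eq_fintype_card, QuaternionGroup.card]; norm_num
  obtain ⟨k, hk⟩ := Subgroup.mem_zpowers_iff.1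
    (mulAut_mem_zpowers_of_commute hu (commute_restrictLeft hcop hψ))
  have hψ_conj : ψ = MulAut.conj (inr (u₀ ^ k)) :=
    eq_conj_inr_of_restrictLeft_eq hcop hk.symm hψH
  refine ⟨c⁻¹ * inr (u₀ ^ k), fun x => ?_⟩
  have hx := DFunLike.congr_fun hψ_conj x
  rw [MulAut.mul_apply, MulAut.conj_apply, MulAut.conj_apply] at hx
  calc φ x = c⁻¹ * (c * φ x * c⁻¹) * c := by group
    _ = _ := by rw [hx]; group
end

section
/- Let p be a prime and let P be a finite cyclic group whose order is a power of p. Let u and u' be automorphisms of P whose orders are coprime to p. If there exists a group isomorphism f : P ⋊ ⟨u⟩ ≃ P ⋊ ⟨u'⟩ such that f(û) is conjugate in P ⋊ ⟨u'⟩ to û', then u = u'. -/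
/-!
Orders of elements of `P` divide `p ^ n`, while the `⟨u'⟩`-component of an element of
`P ⋊ ⟨u'⟩` has order dividing `orderOf u'`, coprime to `p`; so `f` maps `P` into `P` and
restricts to an injective endomorphism `ψ` of `P`. Conjugation by `f û` acts on `P` through
its `⟨u'⟩`-component, which is `u'` because `f û` is conjugate to `û'` and `⟨u'⟩` is abelian.
Applying `f` to `û x û⁻¹ = u x` thus gives `ψ ∘ u = u' ∘ ψ`, and since endomorphisms of a
cyclic group commute, `ψ ∘ u = ψ ∘ u'`, whence `u = u'` by injectivity of `ψ`.
-/

open SemidirectProduct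
open scoped IsMulCommutative

theorem MonoidHom.apply_comm_of_isCyclic {G : Type*} [Group G] [IsCyclic G] (σ τ : G →* G)
    (g : G) : σ (τ g) = τ (σ g) := by
  obtain ⟨m, hm⟩ := σ.map_cyclic
  obtain ⟨k, hk⟩ := τ.map_cyclic
  simp only [hm, hk, ← zpow_mul, mul_comm]

namespace SemidirectProduct

variable {N G : Type*} [Group N] [Group G] {φ : G →* MulAut N}

theorem right_eq_one_of_coprime {g : N ⋊[φ] G} {n : ℕ} (hg : (orderOf g).Coprime n)
    (hn : orderOf g.right ∣ n) : g.right = 1 :=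
  orderOf_eq_one_iff.mp <| (hg.coprime_dvd_left (orderOf_map_dvd rightHom g)).eq_one_of_dvd hn

theorem right_eq_of_isConj [IsMulCommutative G] {a b : N ⋊[φ] G} (h : IsConj a b) :
    a.right = b.right :=
  isConj_iff_eq.mp (rightHom.map_isConj h)

theorem conj_inl [IsMulCommutative N] (g : N ⋊[φ] G) (n : N) :
    g * inl n * g⁻¹ = inl (φ g.right n) := by
  ext
  · simp [mul_comm g.left]
  · simp

theorem exists_map_inl_eq_inl {N' G' : Type*} [Group N'] [Group G'] {φ' : G' →* MulAut N'}
    (f : N ⋊[φ] G →* N' ⋊[φ'] G') (hf : ∀ n, (f (inl n)).right = 1) :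
    ∃ ψ : N →* N', ∀ n, f (inl n) = inl (ψ n) := by
  refine ⟨{ toFun n := (f (inl n)).left, map_one' := by simp, map_mul' x y := ?_ }, fun n => ?_⟩
  · simp [mul_left, hf]
  · ext <;> simp [hf]

end SemidirectProduct

theorem cyclic_pGroup_pair_iso_iff_eq_general
    (p : ℕ) (P : Type*) [Group P] [IsCyclic P]
    (hP : ∃ n : ℕ, Nat.card P = p ^ n)
    (u u' : MulAut P)
    (hu' : Nat.Coprime (orderOf u') p)
    (f : SemidirectProduct P ↥(Subgroup.zpowers u) ((Subgroup.zpowers u).subtype) ≃*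
         SemidirectProduct P ↥(Subgroup.zpowers u') ((Subgroup.zpowers u').subtype))
    (hf : IsConj (f (SemidirectProduct.inr ⟨u, Subgroup.mem_zpowers u⟩))
      (SemidirectProduct.inr ⟨u', Subgroup.mem_zpowers u'⟩)) :
    u = u' := by
  obtain ⟨n, hn⟩ := hP
  set û : P ⋊[(Subgroup.zpowers u).subtype] Subgroup.zpowers u := inr ⟨u, Subgroup.mem_zpowers u⟩
  have hcop (x : P) : (orderOf (f (inl x))).Coprime (orderOf u') := by
    rw [f.orderOf_eq, orderOf_injective _ inl_injective]
    exact (hu'.pow_right n).symm.coprime_dvd_left (hn ▸ orderOf_dvd_natCard x)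
  obtain ⟨ψ, hψ⟩ : ∃ ψ : P →* P, ∀ x, f (inl x) = inl (ψ x) :=
    exists_map_inl_eq_inl f.toMonoidHom fun x => right_eq_one_of_coprime (hcop x)
      (Subgroup.orderOf_coe (f (inl x)).right ▸ orderOf_dvd_of_mem_zpowers (f (inl x)).right.2)
  have hψ_inj : Function.Injective ψ := fun x y hxy =>
    inl_injective (f.injective (by rw [hψ, hψ, hxy]))
  have hright : ((f û).right : MulAut P) = u' := congrArg Subtype.val (right_eq_of_isConj hf)
  have hsemiconj (x : P) : ψ (u x) = u' (ψ x) := by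
    apply inl_injective (φ := (Subgroup.zpowers u').subtype)
    calc inl (ψ (u x)) = f (inl (u x)) := (hψ _).symm
      _ = f (û * inl x * û⁻¹) := by rw [← map_inv, ← inl_aut]; rfl
      _ = f û * inl (ψ x) * (f û)⁻¹ := by rw [map_mul, map_mul, map_inv, hψ]
      _ = inl (u' (ψ x)) := by rw [conj_inl, Subgroup.subtype_apply, hright]
  ext x
  apply hψ_inj
  rw [hsemiconj, ← MulEquiv.coe_toMonoidHom, MonoidHom.apply_comm_of_isCyclic]

/-- For a finite cyclic `p`-group `P` and automorphisms `u, u'` of `P` of order coprime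
to `p`, if there is a group isomorphism `P ⋊ ⟨u⟩ ≃* P ⋊ ⟨u'⟩` carrying `û` to a
conjugate of `û'`, then `u = u'`. -/
theorem cyclic_pGroup_pair_iso_iff_eq
    (p : ℕ) (hp : p.Prime) (P : Type*) [Group P] [Finite P] [IsCyclic P]
    (hP : ∃ n : ℕ, Nat.card P = p ^ n)
    (u u' : MulAut P)
    (hu : Nat.Coprime (orderOf u) p) (hu' : Nat.Coprime (orderOf u') p)
    (f : SemidirectProduct P ↥(Subgroup.zpowers u) ((Subgroup.zpowers u).subtype) ≃*
         SemidirectProduct P ↥(Subgroup.zpowers u') ((Subgroup.zpowers u').subtype))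
    (hf : IsConj (f (SemidirectProduct.inr ⟨u, Subgroup.mem_zpowers u⟩))
      (SemidirectProduct.inr ⟨u', Subgroup.mem_zpowers u'⟩)) :
    u = u' :=
  cyclic_pGroup_pair_iso_iff_eq_general p P hP u u' hu' f hf
end

section
/- Let p be a prime, let P be a finite cyclic group whose order is a power of p, and let u be an automorphism of P of order coprime to p. Set G = P ⋊ ⟨u⟩ and let A be the subgroup of Aut(G) consisting of all automorphisms φ such that φ(û) is conjugate in G to û. Then A contains every inner automorphism of G, and the quotient of A by the subgroup of inner automorphisms of G is isomorphic to Aut(P)/⟨u⟩; in particular this quotient is abelian. (In the paper's notation: Out(P, u) ≅ Aut(P)/⟨u⟩.) -/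
/-- Automorphisms of a cyclic group commute. -/
theorem mulAut_comm_of_isCyclic {P : Type*} [Group P] [IsCyclic P] (a b : MulAut P) :
    a * b = b * a := by
  obtain ⟨g, hg⟩ := IsCyclic.exists_generator (α := P)
  ext x
  obtain ⟨k, rfl⟩ := hg x
  obtain ⟨m, hm⟩ := hg (a g)
  obtain ⟨n, hn⟩ := hg (b g)
  have ha : ∀ l : ℤ, a (g ^ l) = g ^ (m * l) := fun l => by
    rw [map_zpow, ← hm, ← zpow_mul]
  have hb : ∀ l : ℤ, b (g ^ l) = g ^ (n * l) := fun l => by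
    rw [map_zpow, ← hn, ← zpow_mul]
  rw [MulAut.mul_apply, MulAut.mul_apply, ha, hb, hb, ha, ← mul_assoc, ← mul_assoc,
    mul_comm m n]

/-- Every subgroup of the automorphism group of a cyclic group is normal. -/
instance zpowersNormalOfCyclic {P : Type*} [Group P] [IsCyclic P] (u : MulAut P) :
    (Subgroup.zpowers u).Normal := by
  constructor
  intro n hn g
  have : g * n * g⁻¹ = n := by
    rw [mulAut_comm_of_isCyclic g n, mul_inv_cancel_right]
  rwa [this]

/-- The inner automorphisms form a normal subgroup of the automorphism group. -/
instance innRangeNormal (G : Type*) [Group G] :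
    ((MulAut.conj : G →* MulAut G).range).Normal := by
  constructor
  rintro - ⟨x, rfl⟩ ψ
  refine ⟨ψ x, ?_⟩
  ext y
  simp [MulAut.conj_apply, mul_assoc]

open SemidirectProduct

namespace OutAux

variable {P : Type*} [Group P] [Finite P] [IsCyclic P]

/-- cyclic groups are commutative -/
lemma pcomm (a b : P) : a * b = b * a := by
  obtain ⟨g, hg⟩ := IsCyclic.exists_generator (α := P)
  obtain ⟨k, rfl⟩ := hg a
  obtain ⟨l, rfl⟩ := hg b
  rw [← zpow_add, ← zpow_add, add_comm]

abbrev Gsd (u : MulAut P) :=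
  SemidirectProduct P ↥(Subgroup.zpowers u) ((Subgroup.zpowers u).subtype)

variable (u : MulAut P) {p : ℕ}

lemma mem_range_inl (hP : ∃ n : ℕ, Nat.card P = p ^ n) (hu : Nat.Coprime (orderOf u) p)
    (φ : MulAut (Gsd u)) (x : P) : φ (inl x) ∈ (inl : P →* Gsd u).range := by
  obtain ⟨n, hn⟩ := hP
  rw [range_inl_eq_ker_rightHom, MonoidHom.mem_ker]
  set v := rightHom (φ (inl x)) with hv
  have h1 : orderOf (φ (inl x)) = orderOf (inl x : Gsd u) :=
    orderOf_injective φ.toMonoidHom φ.injective _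
  have h2 : orderOf (inl x : Gsd u) = orderOf x := orderOf_injective inl inl_injective x
  have h3 : orderOf v ∣ p ^ n := by
    have h := orderOf_map_dvd (rightHom : Gsd u →* ↥(Subgroup.zpowers u)) (φ (inl x))
    rw [h1, h2] at h
    exact h.trans (hn ▸ orderOf_dvd_natCard x)
  have h4 : orderOf v ∣ orderOf u := by
    have := orderOf_injective ((Subgroup.zpowers u).subtype) (Subgroup.subtype_injective _) v
    rw [Subgroup.coe_subtype] at this
    rw [← this]
    exact orderOf_dvd_of_mem_zpowers v.2
  have hco : Nat.Coprime (orderOf u) (p ^ n) := hu.pow_right n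
  have : orderOf v ∣ 1 := hco ▸ Nat.dvd_gcd h4 h3
  rw [Nat.dvd_one, orderOf_eq_one_iff] at this
  exact this

variable (hP : ∃ n : ℕ, Nat.card P = p ^ n) (hu : Nat.Coprime (orderOf u) p)
include hP hu

/-- restriction of an automorphism of `G` to `P` -/
def resf (φ : MulAut (Gsd u)) (x : P) : P := (φ (inl x)).left

lemma inl_resf (φ : MulAut (Gsd u)) (x : P) :
    (inl (resf u φ x) : Gsd u) = φ (inl x) := by
  obtain ⟨y, hy⟩ := mem_range_inl u hP hu φ x
  rw [resf, ← hy, left_inl]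

def res (φ : MulAut (Gsd u)) : MulAut P where
  toFun := resf u φ
  invFun := resf u φ⁻¹
  left_inv x := inl_injective (φ := (Subgroup.zpowers u).subtype) <| by
    rw [inl_resf u hP hu, inl_resf u hP hu]; simp
  right_inv x := inl_injective (φ := (Subgroup.zpowers u).subtype) <| by
    rw [inl_resf u hP hu, inl_resf u hP hu]; simp
  map_mul' x y := inl_injective (φ := (Subgroup.zpowers u).subtype) <| by
    show (inl (resf u φ (x * y)) : Gsd u) = inl (resf u φ x * resf u φ y)
    rw [inl_resf u hP hu, map_mul (inl : P →* Gsd u) (resf u φ x) (resf u φ y),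
      inl_resf u hP hu, inl_resf u hP hu, ← map_mul φ (inl x) (inl y),
      ← map_mul (inl : P →* Gsd u) x y]

lemma inl_res (φ : MulAut (Gsd u)) (x : P) :
    (inl (res u hP hu φ x) : Gsd u) = φ (inl x) := inl_resf u hP hu φ x

lemma res_mul (φ ψ : MulAut (Gsd u)) :
    res u hP hu (φ * ψ) = res u hP hu φ * res u hP hu ψ := by
  ext x
  apply inl_injective (φ := (Subgroup.zpowers u).subtype)
  rw [inl_res, MulAut.mul_apply, MulAut.mul_apply, inl_res, inl_res]

lemma res_conj (g : Gsd u) :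
    res u hP hu (MulAut.conj g) = (g.right : MulAut P) := by
  ext x
  apply inl_injective (φ := (Subgroup.zpowers u).subtype)
  rw [inl_res, MulAut.conj_apply]
  ext
  · simp [mul_left, mul_right, inv_left, left_inl, right_inl, map_mul]
    rw [pcomm]
    simp [mul_assoc]
  · simp [mul_right, inv_right, right_inl]

omit hP hu

def liftHom (ψ : MulAut P) : Gsd u →* Gsd u :=
  SemidirectProduct.lift ((inl : P →* Gsd u).comp ψ.toMonoidHom) inr (by
    intro v
    refine MonoidHom.ext fun x => ?_
    simp only [MonoidHom.comp_apply, MulEquiv.coe_toMonoidHom, MulAut.conj_apply]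
    rw [show (inr v)⁻¹ = (inr v⁻¹ : Gsd u) from (map_inv _ _).symm, ← inl_aut, inl_inj]
    show ψ ((v : MulAut P) x) = (v : MulAut P) (ψ x)
    have h := mulAut_comm_of_isCyclic ψ (v : MulAut P)
    calc ψ ((v : MulAut P) x) = (ψ * (v : MulAut P)) x := rfl
      _ = ((v : MulAut P) * ψ) x := by rw [h]
      _ = (v : MulAut P) (ψ x) := rfl)

lemma liftHom_inl (ψ : MulAut P) (x : P) : liftHom u ψ (inl x) = inl (ψ x) := by
  simp [liftHom]

lemma liftHom_inr (ψ : MulAut P) (v : ↥(Subgroup.zpowers u)) :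
    liftHom u ψ (inr v) = inr v := by simp [liftHom]

def liftAut (ψ : MulAut P) : MulAut (Gsd u) where
  toFun := liftHom u ψ
  invFun := liftHom u ψ⁻¹
  left_inv g := by
    have h : (liftHom u ψ⁻¹).comp (liftHom u ψ) = MonoidHom.id _ :=
      hom_ext (MonoidHom.ext fun x => by simp [liftHom_inl])
        (MonoidHom.ext fun v => by simp [liftHom_inr])
    simpa using DFunLike.congr_fun h g
  right_inv g := by
    have h : (liftHom u ψ).comp (liftHom u ψ⁻¹) = MonoidHom.id _ :=
      hom_ext (MonoidHom.ext fun x => by simp [liftHom_inl])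
        (MonoidHom.ext fun v => by simp [liftHom_inr])
    simpa using DFunLike.congr_fun h g
  map_mul' := map_mul _

lemma liftAut_inl (ψ : MulAut P) (x : P) : liftAut u ψ (inl x) = inl (ψ x) :=
  liftHom_inl u ψ x

lemma liftAut_inr (ψ : MulAut P) (v : ↥(Subgroup.zpowers u)) :
    liftAut u ψ (inr v) = inr v := liftHom_inr u ψ v

lemma conj_eq_of (χ : MulAut (Gsd u)) (w : MulAut P) (hw : w ∈ Subgroup.zpowers u)
    (h1 : ∀ x : P, χ (inl x) = inl (w x))
    (h2 : χ (inr ⟨u, Subgroup.mem_zpowers u⟩) = inr ⟨u, Subgroup.mem_zpowers u⟩) :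
    χ = MulAut.conj (inr (⟨w, hw⟩ : ↥(Subgroup.zpowers u)) : Gsd u) := by
  have hmh : χ.toMonoidHom =
      (MulAut.conj (inr (⟨w, hw⟩ : ↥(Subgroup.zpowers u)) : Gsd u)).toMonoidHom := by
    apply hom_ext
    · refine MonoidHom.ext fun x => ?_
      simp only [MonoidHom.comp_apply, MulEquiv.coe_toMonoidHom, MulAut.conj_apply]
      rw [h1, show (inr (⟨w, hw⟩ : ↥(Subgroup.zpowers u)) : Gsd u)⁻¹ =
        inr (⟨w, hw⟩ : ↥(Subgroup.zpowers u))⁻¹ from (map_inv _ _).symm, ← inl_aut]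
      rfl
    · refine MonoidHom.ext fun v => ?_
      simp only [MonoidHom.comp_apply, MulEquiv.coe_toMonoidHom, MulAut.conj_apply]
      obtain ⟨k, hk⟩ := v.2
      have hv : v = (⟨u, Subgroup.mem_zpowers u⟩ : ↥(Subgroup.zpowers u)) ^ k :=
        Subtype.ext (by rw [← hk]; simp)
      have hl : χ (inr v) = inr v := by
        rw [hv, map_zpow, map_zpow, h2]
      rw [hl, show (inr (⟨w, hw⟩ : ↥(Subgroup.zpowers u)) : Gsd u)⁻¹ =
        inr (⟨w, hw⟩ : ↥(Subgroup.zpowers u))⁻¹ from (map_inv _ _).symm,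
        ← map_mul, ← map_mul]
      congr 1
      have hc : (⟨w, hw⟩ : ↥(Subgroup.zpowers u)) * v = v * ⟨w, hw⟩ :=
        Subtype.ext (mulAut_comm_of_isCyclic w v.1)
      rw [hc, mul_inv_cancel_right]
  exact MulEquiv.toMonoidHom_injective hmh

include hP hu

lemma mem_inn (φ : MulAut (Gsd u)) (hres : res u hP hu φ ∈ Subgroup.zpowers u)
    (hconj : IsConj (φ (inr ⟨u, Subgroup.mem_zpowers u⟩))
      (inr ⟨u, Subgroup.mem_zpowers u⟩ : Gsd u)) :
    φ ∈ (MulAut.conj : Gsd u →* MulAut (Gsd u)).range := by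
  obtain ⟨c, hc⟩ := isConj_iff.mp hconj
  set χ := MulAut.conj c * φ with hχ
  have h2 : χ (inr ⟨u, Subgroup.mem_zpowers u⟩) = inr ⟨u, Subgroup.mem_zpowers u⟩ := by
    rw [hχ, MulAut.mul_apply, MulAut.conj_apply, hc]
  have hres2 : res u hP hu χ ∈ Subgroup.zpowers u := by
    rw [hχ, res_mul, res_conj]
    exact mul_mem c.right.2 hres
  have h1 : ∀ x : P, χ (inl x) = inl ((res u hP hu χ) x) := fun x =>
    (inl_res u hP hu χ x).symm
  have heq := conj_eq_of u χ _ hres2 h1 h2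
  refine ⟨c⁻¹ * inr ⟨res u hP hu χ, hres2⟩, ?_⟩
  rw [map_mul, map_inv, ← heq, hχ, inv_mul_cancel_left]

end OutAux

open OutAux in
/-- For a finite cyclic `p`-group `P` and a `p'`-automorphism `u` of `P`, with
`G = P ⋊ ⟨u⟩`, the subgroup `A ≤ Aut(G)` of automorphisms sending `û` to a conjugate
of `û` contains all inner automorphisms, and `A/Inn(G) ≅ Aut(P)/⟨u⟩`; in particular
this quotient is abelian.  (In the paper's notation: `Out(P, u) ≅ Aut(P)/⟨u⟩`.) -/
theorem out_cyclic_pair_iso_aut_mod_zpowers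
    (p : ℕ) (hp : p.Prime) (P : Type*) [Group P] [Finite P] [IsCyclic P]
    (hP : ∃ n : ℕ, Nat.card P = p ^ n)
    (u : MulAut P) (hu : Nat.Coprime (orderOf u) p)
    (A : Subgroup (MulAut (SemidirectProduct P ↥(Subgroup.zpowers u)
      ((Subgroup.zpowers u).subtype))))
    (hA : ∀ φ : MulAut (SemidirectProduct P ↥(Subgroup.zpowers u)
        ((Subgroup.zpowers u).subtype)),
      φ ∈ A ↔ IsConj (φ (SemidirectProduct.inr ⟨u, Subgroup.mem_zpowers u⟩))
        (SemidirectProduct.inr ⟨u, Subgroup.mem_zpowers u⟩)) :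
    (MulAut.conj : SemidirectProduct P ↥(Subgroup.zpowers u)
        ((Subgroup.zpowers u).subtype) →*
      MulAut (SemidirectProduct P ↥(Subgroup.zpowers u)
        ((Subgroup.zpowers u).subtype))).range ≤ A ∧
    Nonempty ((A ⧸ ((MulAut.conj : SemidirectProduct P ↥(Subgroup.zpowers u)
        ((Subgroup.zpowers u).subtype) →*
      MulAut (SemidirectProduct P ↥(Subgroup.zpowers u)
        ((Subgroup.zpowers u).subtype))).range.subgroupOf A)) ≃*
      (MulAut P ⧸ Subgroup.zpowers u)) ∧
    (∀ x y : MulAut P ⧸ Subgroup.zpowers u, x * y = y * x) := by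
  have hInn : (MulAut.conj : Gsd u →* MulAut (Gsd u)).range ≤ A := by
    rintro φ ⟨c, rfl⟩
    rw [hA]
    exact IsConj.symm (isConj_iff.mpr ⟨c, (MulAut.conj_apply c _).symm⟩)
  refine ⟨hInn, ?_, ?_⟩
  · set F : A →* (MulAut P ⧸ Subgroup.zpowers u) :=
      MonoidHom.mk' (fun a => QuotientGroup.mk (res u hP hu a.1))
        (fun a b => by
          show QuotientGroup.mk (res u hP hu ((a * b : A) : MulAut (Gsd u))) =
            QuotientGroup.mk (res u hP hu (a : MulAut (Gsd u))) *
            QuotientGroup.mk (res u hP hu (b : MulAut (Gsd u)))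
          rw [show ((a * b : A) : MulAut (Gsd u)) = (a : MulAut (Gsd u)) * b from rfl,
            res_mul, QuotientGroup.mk_mul]) with hF
    have hsurj : Function.Surjective F := by
      intro q
      induction q using QuotientGroup.induction_on with
      | H ψ =>
        refine ⟨⟨liftAut u ψ, ?_⟩, ?_⟩
        · rw [hA, liftAut_inr]
        · show QuotientGroup.mk (res u hP hu (liftAut u ψ)) = _
          congr 1
          ext x
          apply SemidirectProduct.inl_injective (φ := (Subgroup.zpowers u).subtype)
          rw [inl_res, liftAut_inl]
    have hker : F.ker = (MulAut.conj : Gsd u →* MulAut (Gsd u)).range.subgroupOf A := by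
      ext a
      rw [MonoidHom.mem_ker, Subgroup.mem_subgroupOf]
      constructor
      · intro h
        exact mem_inn u hP hu a.1 ((QuotientGroup.eq_one_iff _).mp h) ((hA a.1).mp a.2)
      · rintro ⟨c, hc⟩
        show QuotientGroup.mk (res u hP hu a.1) = 1
        rw [QuotientGroup.eq_one_iff, ← hc, res_conj]
        exact c.right.2
    exact ⟨(QuotientGroup.quotientMulEquivOfEq hker.symm).trans
      (QuotientGroup.quotientKerEquivOfSurjective F hsurj)⟩
  · intro x y
    induction x using QuotientGroup.induction_on with
    | H a =>
      induction y using QuotientGroup.induction_on with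
      | H b =>
        rw [← QuotientGroup.mk_mul, ← QuotientGroup.mk_mul, mulAut_comm_of_isCyclic a b]
end
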